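/- arXiv:2010.06809 — 5 statements merged into one kernel-verified Lean document; each statement's English description precedes it below -/
import Mathlib

section
/- If a connected simple graph G is not (k+1)-connected, then mc(G) ≤ m - n + k + 1. -/
open SimpleGraph

def IsMCColoring {V : Type*} (G : SimpleGraph V) (c : Sym2 V → ℕ) : Prop :=
  ∀ u v : V, ∃ p : G.Walk u v, ∃ k : ℕ, ∀ e ∈ p.edges, c e = k

noncomputable def mcNumber {V : Type*} (G : SimpleGraph V) : ℕ :=
  sSup {n : ℕ | ∃ c : Sym2 V → ℕ, IsMCColoring G c ∧ Nat.card (c '' G.edgeSet) = n}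

def IsKConnected {V : Type*} [Fintype V] (G : SimpleGraph V) (k : ℕ) : Prop :=
  k < Fintype.card V ∧ ∀ S : Finset V, S.card < k →
    ((⊤ : G.Subgraph).deleteVerts ↑S).coe.Connected

def graphJoin {α β : Type*} (G₁ : SimpleGraph α) (G₂ : SimpleGraph β) :
    SimpleGraph (α ⊕ β) where
  Adj x y :=
    match x, y with
    | Sum.inl a, Sum.inl b => G₁.Adj a b
    | Sum.inr a, Sum.inr b => G₂.Adj a b
    | _, _ => True
  symm := ⟨by rintro (a|a) (b|b) h <;> first | exact h.symm | trivial⟩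
  loopless := ⟨by rintro (a|a) h <;> first | exact G₁.irrefl h | exact G₂.irrefl h⟩

def IsMinor {β α : Type*} (H : SimpleGraph β) (G : SimpleGraph α) : Prop :=
  ∃ f : β → Set α,
    (∀ b, (f b).Nonempty) ∧
    (∀ b, (G.induce (f b)).Connected) ∧
    (∀ b₁ b₂, b₁ ≠ b₂ → Disjoint (f b₁) (f b₂)) ∧
    (∀ b₁ b₂, H.Adj b₁ b₂ → ∃ x ∈ f b₁, ∃ y ∈ f b₂, G.Adj x y)

def IsPlanar {α : Type*} (G : SimpleGraph α) : Prop :=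
  ¬ IsMinor (completeGraph (Fin 5)) G ∧
  ¬ IsMinor (completeBipartiteGraph (Fin 3) (Fin 3)) G

def IsOuterplanar {α : Type*} (G : SimpleGraph α) : Prop :=
  ¬ IsMinor (completeGraph (Fin 4)) G ∧
  ¬ IsMinor (completeBipartiteGraph (Fin 2) (Fin 3)) G

def PerfectlyConnected {V : Type*} (G : SimpleGraph V) (s : ℕ) : Prop :=
  ∃ (v : V) (P : Fin s → Set V),
    (∀ i, (P i).Nonempty) ∧
    (∀ i, v ∉ P i) ∧
    (Pairwise fun i j => Disjoint (P i) (P j)) ∧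
    (∀ x : V, x ≠ v → ∃ i, x ∈ P i) ∧
    (∀ i, (G.induce (P i)).Connected) ∧
    (∀ i j, i ≠ j → ∀ x ∈ P i, ∀ y ∈ P j, G.Adj x y) ∧
    (∀ i, ∃! u, u ∈ P i ∧ G.Adj v u)

open Finset

attribute [local instance] Classical.propDecidable

namespace MCAux

variable {V : Type*}

def MReach (G : SimpleGraph V) (c : Sym2 V → ℕ) (i : ℕ) (u v : V) : Prop :=
  ∃ p : G.Walk u v, ∀ e ∈ p.edges, c e = i

def AReach (G : SimpleGraph V) (S : Finset V) (u v : V) : Prop :=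
  ∃ p : G.Walk u v, ∀ x ∈ p.support, x ∉ S

variable {G : SimpleGraph V} {c : Sym2 V → ℕ} {i : ℕ} {S : Finset V} {u v w x : V}

theorem MReach.refl (G : SimpleGraph V) (c : Sym2 V → ℕ) (i : ℕ) (u : V) :
    MReach G c i u u := ⟨Walk.nil, by simp⟩

theorem MReach.symm (h : MReach G c i u v) : MReach G c i v u := by
  obtain ⟨p, hp⟩ := h
  exact ⟨p.reverse, fun e he => hp e (by simpa [Walk.edges_reverse] using he)⟩

theorem MReach.trans (h : MReach G c i u v) (h' : MReach G c i v x) :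
    MReach G c i u x := by
  obtain ⟨p, hp⟩ := h; obtain ⟨q, hq⟩ := h'
  refine ⟨p.append q, fun e he => ?_⟩
  rw [Walk.edges_append, List.mem_append] at he
  exact he.elim (hp e) (hq e)

theorem AReach.refl (hu : u ∉ S) : AReach G S u u := ⟨Walk.nil, by simpa⟩

theorem AReach.symm (h : AReach G S u v) : AReach G S v u := by
  obtain ⟨p, hp⟩ := h
  exact ⟨p.reverse, fun e he => hp e (by simpa [Walk.support_reverse] using he)⟩

theorem AReach.trans (h : AReach G S u v) (h' : AReach G S v x) :
    AReach G S u x := by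
  obtain ⟨p, hp⟩ := h; obtain ⟨q, hq⟩ := h'
  refine ⟨p.append q, fun e he => ?_⟩
  rw [Walk.mem_support_append_iff] at he
  exact he.elim (hp e) (hq e)

theorem AReach.start_not_mem (h : AReach G S u v) : u ∉ S := by
  obtain ⟨p, hp⟩ := h; exact hp u p.start_mem_support

theorem AReach.end_not_mem (h : AReach G S u v) : v ∉ S := by
  obtain ⟨p, hp⟩ := h; exact hp v p.end_mem_support

private theorem mreach_len (h : MReach G c i u v) :
    ∃ n, ∃ p : G.Walk u v, p.length = n ∧ ∀ e ∈ p.edges, c e = i := by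
  obtain ⟨p, hp⟩ := h; exact ⟨p.length, p, rfl, hp⟩

noncomputable def mdist (G : SimpleGraph V) (c : Sym2 V → ℕ) (i : ℕ) (u v : V) : ℕ :=
  if h : MReach G c i u v then Nat.find (mreach_len h) else 0

theorem mreach_step (h : MReach G c i u v) (hne : v ≠ u) :
    ∃ x, G.Adj v x ∧ c s(v, x) = i ∧ MReach G c i u x ∧
      mdist G c i u x < mdist G c i u v := by
  have hd : mdist G c i u v = Nat.find (mreach_len h) := by
    rw [mdist, dif_pos h]
  obtain ⟨p, hlen, hmono⟩ := Nat.find_spec (mreach_len h)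
  obtain ⟨x, hadj, q, hq⟩ := Walk.exists_eq_cons_of_ne hne p.reverse
  have hmem : ∀ e ∈ q.edges, e ∈ p.edges := by
    intro e he
    have : e ∈ p.reverse.edges := by rw [hq]; simp [he]
    simpa [Walk.edges_reverse] using this
  have hcol : c s(v, x) = i := by
    apply hmono
    have : s(v, x) ∈ p.reverse.edges := by rw [hq]; simp
    simpa [Walk.edges_reverse] using this
  have hrx : MReach G c i u x :=
    ⟨q.reverse, fun e he => hmono e (hmem e (by simpa [Walk.edges_reverse] using he))⟩
  refine ⟨x, hadj, hcol, hrx, ?_⟩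
  have hqlen : q.length + 1 = p.length := by
    have := congrArg Walk.length hq
    simpa [Walk.length_reverse] using this.symm
  have hx : mdist G c i u x ≤ q.length := by
    rw [mdist, dif_pos hrx]
    exact Nat.find_le ⟨q.reverse, by simp [Walk.length_reverse],
      fun e he => hmono e (hmem e (by simpa [Walk.edges_reverse] using he))⟩
  omega

theorem mreach_cross {a b : V} (hnA : ¬ AReach G S a b) (h : MReach G c i a b) :
    ∃ z ∈ S, MReach G c i a z := by
  obtain ⟨p, hp⟩ := h
  by_cases hall : ∀ x ∈ p.support, x ∉ S
  · exact absurd ⟨p, hall⟩ hnA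
  · push_neg at hall
    obtain ⟨z, hzsup, hzS⟩ := hall
    exact ⟨z, hzS, ⟨p.takeUntil z hzsup,
      fun e he => hp e (Walk.edges_takeUntil_subset _ _ he)⟩⟩

theorem card3 {α : Type*} [DecidableEq α] {X X₁ X₂ T : Finset α} (h1 : X₁ ⊆ X) (h2 : X₂ ⊆ X)
    (h3 : T ⊆ X) (d12 : Disjoint X₁ X₂) (d1T : Disjoint X₁ T) (d2T : Disjoint X₂ T) :
    X₁.card + X₂.card + T.card ≤ X.card := by
  have he : (X₁ ∪ X₂ ∪ T).card = X₁.card + X₂.card + T.card := by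
    rw [Finset.card_union_of_disjoint (Finset.disjoint_union_left.2 ⟨d1T, d2T⟩),
        Finset.card_union_of_disjoint d12]
  rw [← he]
  exact Finset.card_le_card (Finset.union_subset (Finset.union_subset h1 h2) h3)

section Fin

variable [Fintype V]

noncomputable def Cset (G : SimpleGraph V) (c : Sym2 V → ℕ) (i : ℕ) (u : V) : Finset V :=
  univ.filter (fun v => MReach G c i u v)

noncomputable def EUset (G : SimpleGraph V) (c : Sym2 V → ℕ) (i : ℕ) (u : V) : Finset (Sym2 V) :=
  G.edgeFinset.filter (fun e => c e = i ∧ ∀ x ∈ e, MReach G c i u x)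

noncomputable def Eset (G : SimpleGraph V) (c : Sym2 V → ℕ) (i : ℕ) : Finset (Sym2 V) :=
  G.edgeFinset.filter (fun e => c e = i)

noncomputable def Aset (G : SimpleGraph V) (S : Finset V) (u : V) : Finset V :=
  univ.filter (fun v => AReach G S u v)

noncomputable def Bset (G : SimpleGraph V) (S : Finset V) (u : V) : Finset V :=
  univ \ (Aset G S u ∪ S)

theorem mem_Cset : v ∈ Cset G c i u ↔ MReach G c i u v := by simp [Cset]

theorem mem_Aset : v ∈ Aset G S u ↔ AReach G S u v := by simp [Aset]

theorem mem_Bset : v ∈ Bset G S u ↔ ¬ AReach G S u v ∧ v ∉ S := by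
  simp [Bset, Aset, not_or]

theorem EUset_subset : EUset G c i u ⊆ Eset G c i := by
  intro e he
  simp only [EUset, Eset, Finset.mem_filter] at *
  tauto

/-- key counting lemma: the color component of `u₀` with `t` vertices needs ≥ `t-1` edges. -/
theorem card_reach_le (G : SimpleGraph V) (c : Sym2 V → ℕ) (i : ℕ) (u₀ : V) :
    (Cset G c i u₀).card ≤ (EUset G c i u₀).card + 1 := by
  have hu₀ : u₀ ∈ Cset G c i u₀ := mem_Cset.2 (MReach.refl G c i u₀)
  have key : ∀ v, MReach G c i u₀ v → v ≠ u₀ →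
      ∃ x, G.Adj v x ∧ c s(v, x) = i ∧ MReach G c i u₀ x ∧
        mdist G c i u₀ x < mdist G c i u₀ v := fun v hv hne => mreach_step hv hne
  choose! f h1 h2 h3 h4 using key
  have hcard : ((Cset G c i u₀).erase u₀).card ≤ (EUset G c i u₀).card := by
    apply Finset.card_le_card_of_injOn (fun v => s(v, f v))
    · intro v hv
      rw [Finset.mem_coe, Finset.mem_erase] at hv
      obtain ⟨hne, hvCF⟩ := hv
      have hr := mem_Cset.1 hvCF
      simp only [Finset.mem_coe, EUset, Finset.mem_filter]
      refine ⟨by simp [mem_edgeFinset, h1 v hr hne], h2 v hr hne, ?_⟩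
      intro x hx
      rw [Sym2.mem_iff] at hx
      rcases hx with rfl | rfl
      · exact hr
      · exact h3 v hr hne
    · intro v₁ hv₁ v₂ hv₂ heq
      simp only [Finset.coe_erase, Set.mem_diff, Finset.mem_coe, Set.mem_singleton_iff] at hv₁ hv₂
      have hr₁ : MReach G c i u₀ v₁ := mem_Cset.1 hv₁.1
      have hr₂ : MReach G c i u₀ v₂ := mem_Cset.1 hv₂.1
      rw [Sym2.eq_iff] at heq
      rcases heq with ⟨h, _⟩ | ⟨ha, hb⟩
      · exact h
      · exfalso
        have l1 := h4 v₁ hr₁ hv₁.2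
        have l2 := h4 v₂ hr₂ hv₂.2
        rw [hb] at l1; rw [← ha] at l2
        omega
  have := Finset.card_erase_add_one hu₀
  omega

end Fin

end MCAux

namespace MCAux
section Fin
variable {V : Type*} [Fintype V] {G : SimpleGraph V} {c : Sym2 V → ℕ} {i : ℕ}
  {S : Finset V} {u v w : V}

open SimpleGraph Finset

theorem samecase (hu : u ∉ S) (hw : w ∉ S) (hcut : ¬ AReach G S u w) (i : ℕ)
    (hsame : MReach G c i u w) :
    ((Aset G S u).erase u ∩ Cset G c i w).card
      + ((Bset G S u).erase w ∩ Cset G c i u).card + 2 ≤ (Eset G c i).card := by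
  obtain ⟨z, hzS, hzC⟩ := mreach_cross hcut hsame
  have hwA : w ∉ Aset G S u := fun hmem => hcut (mem_Aset.1 hmem)
  have huA : u ∈ Aset G S u := mem_Aset.2 (AReach.refl hu)
  have t1 : ((Aset G S u).erase u ∩ Cset G c i w).card
      ≤ ((Aset G S u).erase u ∩ Cset G c i u).card := by
    apply card_le_card
    intro v hv
    simp only [mem_inter, mem_Cset] at *
    exact ⟨hv.1, hsame.trans hv.2⟩
  have hTsub : ({u, w, z} : Finset V) ⊆ Cset G c i u := by
    intro x hx
    simp only [mem_insert, mem_singleton] at hx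
    rcases hx with rfl | rfl | rfl
    · exact mem_Cset.2 (MReach.refl G c i x)
    · exact mem_Cset.2 hsame
    · exact mem_Cset.2 hzC
  have d12 : Disjoint ((Aset G S u).erase u ∩ Cset G c i u)
      ((Bset G S u).erase w ∩ Cset G c i u) := by
    rw [Finset.disjoint_left]
    intro x hx hx'
    have h1 : x ∈ Aset G S u := (Finset.mem_erase.1 (Finset.mem_inter.1 hx).1).2
    have h2 : x ∈ Bset G S u := (Finset.mem_erase.1 (Finset.mem_inter.1 hx').1).2
    exact (mem_Bset.1 h2).1 (mem_Aset.1 h1)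
  have d1T : Disjoint ((Aset G S u).erase u ∩ Cset G c i u) ({u, w, z} : Finset V) := by
    rw [Finset.disjoint_left]
    intro x hx hx'
    have h1 := Finset.mem_erase.1 (Finset.mem_inter.1 hx).1
    simp only [mem_insert, mem_singleton] at hx'
    rcases hx' with rfl | rfl | rfl
    · exact h1.1 rfl
    · exact hwA h1.2
    · exact (mem_Aset.1 h1.2).end_not_mem hzS
  have d2T : Disjoint ((Bset G S u).erase w ∩ Cset G c i u) ({u, w, z} : Finset V) := by
    rw [Finset.disjoint_left]
    intro x hx hx'
    have h1 := Finset.mem_erase.1 (Finset.mem_inter.1 hx).1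
    have h2 := mem_Bset.1 h1.2
    simp only [mem_insert, mem_singleton] at hx'
    rcases hx' with rfl | rfl | rfl
    · exact h2.1 (AReach.refl hu)
    · exact h1.1 rfl
    · exact h2.2 hzS
  have hT : ({u, w, z} : Finset V).card = 3 := by
    have huw : u ≠ w := fun h => hwA (h ▸ huA)
    have huz : u ≠ z := fun h => hu (h ▸ hzS)
    have hwz : w ≠ z := fun h => hw (h ▸ hzS)
    rw [Finset.card_insert_of_notMem (by simp [huw, huz]),
      Finset.card_insert_of_notMem (by simp [hwz]), Finset.card_singleton]
  have t2 := card3 (Finset.inter_subset_right) (Finset.inter_subset_right) hTsub d12 d1T d2T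
  rw [hT] at t2
  have hL1 := card_reach_le G c i u
  have hEsub := Finset.card_le_card (EUset_subset (G := G) (c := c) (i := i) (u := u))
  omega

theorem factB (hu : u ∉ S) (i : ℕ)
    (hne : (((Bset G S u).erase w ∩ Cset G c i u)).Nonempty) :
    ((Bset G S u).erase w ∩ Cset G c i u).card + 2 ≤ (Cset G c i u).card := by
  obtain ⟨b, hb⟩ := hne
  have hb1 := Finset.mem_erase.1 (Finset.mem_inter.1 hb).1
  have hb2 := mem_Cset.1 (Finset.mem_inter.1 hb).2
  have hbB := mem_Bset.1 hb1.2
  obtain ⟨z, hzS, hzC⟩ := mreach_cross hbB.1 hb2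
  have hTsub : ({u, z} : Finset V) ⊆ Cset G c i u := by
    intro x hx
    simp only [mem_insert, mem_singleton] at hx
    rcases hx with rfl | rfl
    · exact mem_Cset.2 (MReach.refl G c i x)
    · exact mem_Cset.2 hzC
  have d2T : Disjoint ((Bset G S u).erase w ∩ Cset G c i u) ({u, z} : Finset V) := by
    rw [Finset.disjoint_left]
    intro x hx hx'
    have h1 := Finset.mem_erase.1 (Finset.mem_inter.1 hx).1
    have h2 := mem_Bset.1 h1.2
    simp only [mem_insert, mem_singleton] at hx'
    rcases hx' with rfl | rfl
    · exact h2.1 (AReach.refl hu)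
    · exact h2.2 hzS
  have hT : ({u, z} : Finset V).card = 2 := by
    have huz : u ≠ z := fun h => hu (h ▸ hzS)
    rw [Finset.card_insert_of_notMem (by simp [huz]), Finset.card_singleton]
  have t2 := card3 (X₁ := (∅ : Finset V)) (Finset.empty_subset _)
    (Finset.inter_subset_right) hTsub (Finset.disjoint_empty_left _)
    (Finset.disjoint_empty_left _) d2T
  rw [hT] at t2
  simpa using t2

theorem factA (hu : u ∉ S) (hw : w ∉ S) (hcut : ¬ AReach G S u w) (i : ℕ)
    (hne : (((Aset G S u).erase u ∩ Cset G c i w)).Nonempty) :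
    ((Aset G S u).erase u ∩ Cset G c i w).card + 2 ≤ (Cset G c i w).card := by
  obtain ⟨a, ha⟩ := hne
  have ha1 := Finset.mem_erase.1 (Finset.mem_inter.1 ha).1
  have ha2 := mem_Cset.1 (Finset.mem_inter.1 ha).2
  have haA := mem_Aset.1 ha1.2
  have hnA : ¬ AReach G S w a := fun har => hcut (haA.trans har.symm)
  obtain ⟨z, hzS, hzC⟩ := mreach_cross hnA ha2
  have hwA : w ∉ Aset G S u := fun hmem => hcut (mem_Aset.1 hmem)
  have hTsub : ({w, z} : Finset V) ⊆ Cset G c i w := by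
    intro x hx
    simp only [mem_insert, mem_singleton] at hx
    rcases hx with rfl | rfl
    · exact mem_Cset.2 (MReach.refl G c i x)
    · exact mem_Cset.2 hzC
  have d2T : Disjoint ((Aset G S u).erase u ∩ Cset G c i w) ({w, z} : Finset V) := by
    rw [Finset.disjoint_left]
    intro x hx hx'
    have h1 := Finset.mem_erase.1 (Finset.mem_inter.1 hx).1
    simp only [mem_insert, mem_singleton] at hx'
    rcases hx' with rfl | rfl
    · exact hwA h1.2
    · exact (mem_Aset.1 h1.2).end_not_mem hzS
  have hT : ({w, z} : Finset V).card = 2 := by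
    have hwz : w ≠ z := fun h => hw (h ▸ hzS)
    rw [Finset.card_insert_of_notMem (by simp [hwz]), Finset.card_singleton]
  have t2 := card3 (X₁ := (∅ : Finset V)) (Finset.empty_subset _)
    (Finset.inter_subset_right) hTsub (Finset.disjoint_empty_left _)
    (Finset.disjoint_empty_left _) d2T
  rw [hT] at t2
  simpa using t2

theorem percolor (hu : u ∉ S) (hw : w ∉ S) (hcut : ¬ AReach G S u w) (i : ℕ)
    (hiQ : i ∈ G.edgeFinset.image c) :
    ((Aset G S u).erase u ∩ Cset G c i w).card
      + ((Bset G S u).erase w ∩ Cset G c i u).card + 1 ≤ (Eset G c i).card := by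
  by_cases hsame : MReach G c i u w
  · have := samecase hu hw hcut i hsame; omega
  · have hdis : Disjoint (EUset G c i u) (EUset G c i w) := by
      rw [Finset.disjoint_left]
      intro e heU heW
      induction e using Sym2.ind with
      | _ a b =>
        simp only [EUset, Finset.mem_filter] at heU heW
        have h1 : MReach G c i u a := heU.2.2 a (Sym2.mem_mk_left a b)
        have h2 : MReach G c i w a := heW.2.2 a (Sym2.mem_mk_left a b)
        exact hsame (h1.trans h2.symm)
    have hun : (EUset G c i u).card + (EUset G c i w).card ≤ (Eset G c i).card := by
      rw [← Finset.card_union_of_disjoint hdis]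
      exact Finset.card_le_card (Finset.union_subset EUset_subset EUset_subset)
    have hL1u := card_reach_le G c i u
    have hL1w := card_reach_le G c i w
    have hEpos : 0 < (Eset G c i).card := by
      obtain ⟨e, he, hce⟩ := Finset.mem_image.1 hiQ
      exact Finset.card_pos.2 ⟨e, by simp [Eset, Finset.mem_filter, he, hce]⟩
    rcases ((Bset G S u).erase w ∩ Cset G c i u).eq_empty_or_nonempty with hB0 | hBn
    · rcases ((Aset G S u).erase u ∩ Cset G c i w).eq_empty_or_nonempty with hA0 | hAn
      · rw [hB0, hA0]; simpa using hEpos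
      · have := factA hu hw hcut i hAn
        rw [hB0]
        simp only [Finset.card_empty]
        omega
    · rcases ((Aset G S u).erase u ∩ Cset G c i w).eq_empty_or_nonempty with hA0 | hAn
      · have := factB hu i hBn
        rw [hA0]
        simp only [Finset.card_empty]
        omega
      · have h1 := factA hu hw hcut i hAn
        have h2 := factB hu i hBn
        omega

end Fin
end MCAux
namespace MCAux
section Fin
variable {V : Type*} [Fintype V] {G : SimpleGraph V} {c : Sym2 V → ℕ}
  {S : Finset V} {u v w : V}

open SimpleGraph Finset

theorem existsstar (hc : IsMCColoring G c) (hu : u ∉ S) (hw : w ∉ S)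
    (hcut : ¬ AReach G S u w) :
    ∃ i ∈ G.edgeFinset.image c,
      ((Aset G S u).erase u ∩ Cset G c i w).card
        + ((Bset G S u).erase w ∩ Cset G c i u).card + 2 ≤ (Eset G c i).card := by
  have hne : u ≠ w := by rintro rfl; exact hcut (AReach.refl hu)
  obtain ⟨p, j, hj⟩ := hc u w
  obtain ⟨x, hadj, q, rfl⟩ := Walk.exists_eq_cons_of_ne hne p
  have hjQ : j ∈ G.edgeFinset.image c :=
    Finset.mem_image.2 ⟨s(u, x), mem_edgeFinset.2 hadj, hj _ (by simp)⟩
  exact ⟨j, hjQ, samecase hu hw hcut j ⟨Walk.cons hadj q, hj⟩⟩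

theorem main_bound (hc : IsMCColoring G c) (hu : u ∉ S) (hw : w ∉ S)
    (hcut : ¬ AReach G S u w) :
    (G.edgeFinset.image c).card + Fintype.card V ≤ G.edgeFinset.card + S.card + 1 := by
  have hwA : w ∉ Aset G S u := fun hmem => hcut (mem_Aset.1 hmem)
  have huA : u ∈ Aset G S u := mem_Aset.2 (AReach.refl hu)
  have hwB : w ∈ Bset G S u := mem_Bset.2 ⟨hcut, hw⟩
  -- sum of color classes
  have hsum : ∑ i ∈ G.edgeFinset.image c, (Eset G c i).card = G.edgeFinset.card := by
    simp only [Eset]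
    exact (Finset.card_eq_sum_card_fiberwise
      (fun e he => Finset.mem_image_of_mem c he)).symm
  have hlt : ∑ i ∈ G.edgeFinset.image c,
      (((Aset G S u).erase u ∩ Cset G c i w).card
        + ((Bset G S u).erase w ∩ Cset G c i u).card + 1)
      < ∑ i ∈ G.edgeFinset.image c, (Eset G c i).card := by
    apply Finset.sum_lt_sum
    · intro i hi; exact percolor hu hw hcut i hi
    · obtain ⟨j, hjQ, hj⟩ := existsstar hc hu hw hcut
      exact ⟨j, hjQ, by omega⟩
  have hsplit : ∑ i ∈ G.edgeFinset.image c,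
      (((Aset G S u).erase u ∩ Cset G c i w).card
        + ((Bset G S u).erase w ∩ Cset G c i u).card + 1)
      = (∑ i ∈ G.edgeFinset.image c, ((Aset G S u).erase u ∩ Cset G c i w).card)
        + (∑ i ∈ G.edgeFinset.image c, ((Bset G S u).erase w ∩ Cset G c i u).card)
        + (G.edgeFinset.image c).card := by
    rw [Finset.sum_add_distrib, Finset.sum_add_distrib, Finset.sum_const, smul_eq_mul, mul_one]
  -- coverage of A \ {u}
  have hcovA : ((Aset G S u).erase u).card
      ≤ ∑ i ∈ G.edgeFinset.image c, ((Aset G S u).erase u ∩ Cset G c i w).card := by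
    refine le_trans (Finset.card_le_card ?_) Finset.card_biUnion_le
    intro x hx
    have hx1 := Finset.mem_erase.1 hx
    have hxw : w ≠ x := by rintro rfl; exact hwA hx1.2
    obtain ⟨p, j, hj⟩ := hc w x
    obtain ⟨y, hadj, q, rfl⟩ := Walk.exists_eq_cons_of_ne hxw p
    have hjQ : j ∈ G.edgeFinset.image c :=
      Finset.mem_image.2 ⟨s(w, y), mem_edgeFinset.2 hadj, hj _ (by simp)⟩
    exact Finset.mem_biUnion.2 ⟨j, hjQ,
      Finset.mem_inter.2 ⟨hx, mem_Cset.2 ⟨Walk.cons hadj q, hj⟩⟩⟩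
  -- coverage of B \ {w}
  have hcovB : ((Bset G S u).erase w).card
      ≤ ∑ i ∈ G.edgeFinset.image c, ((Bset G S u).erase w ∩ Cset G c i u).card := by
    refine le_trans (Finset.card_le_card ?_) Finset.card_biUnion_le
    intro x hx
    have hx1 := Finset.mem_erase.1 hx
    have hxu : u ≠ x := by
      rintro rfl; exact (mem_Bset.1 hx1.2).1 (AReach.refl hu)
    obtain ⟨p, j, hj⟩ := hc u x
    obtain ⟨y, hadj, q, rfl⟩ := Walk.exists_eq_cons_of_ne hxu p
    have hjQ : j ∈ G.edgeFinset.image c :=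
      Finset.mem_image.2 ⟨s(u, y), mem_edgeFinset.2 hadj, hj _ (by simp)⟩
    exact Finset.mem_biUnion.2 ⟨j, hjQ,
      Finset.mem_inter.2 ⟨hx, mem_Cset.2 ⟨Walk.cons hadj q, hj⟩⟩⟩
  -- vertex counting
  have hAc := Finset.card_erase_add_one huA
  have hBc := Finset.card_erase_add_one hwB
  have hdisAS : Disjoint (Aset G S u) S := by
    rw [Finset.disjoint_left]
    intro x hx hxS
    exact (mem_Aset.1 hx).end_not_mem hxS
  have hAUS : (Aset G S u ∪ S).card = (Aset G S u).card + S.card :=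
    Finset.card_union_of_disjoint hdisAS
  have hBcard : (Bset G S u).card = Fintype.card V - (Aset G S u ∪ S).card := by
    rw [Bset, Finset.card_sdiff_of_subset (Finset.subset_univ _), Finset.card_univ]
  have hle : (Aset G S u ∪ S).card ≤ Fintype.card V := by
    rw [← Finset.card_univ]
    exact Finset.card_le_card (Finset.subset_univ _)
  omega

end Fin
end MCAux

namespace MCAux
section Fin
variable {V : Type*} [Fintype V] {G : SimpleGraph V} {S : Finset V}

open SimpleGraph Finset

theorem verts_le (hG : G.Connected) : Fintype.card V ≤ G.edgeFinset.card + 1 := by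
  obtain ⟨u⟩ := hG.nonempty
  have h1 := card_reach_le G (fun _ => 0) 0 u
  have h2 : Cset G (fun _ => 0) 0 u = univ := by
    ext v
    simp only [mem_Cset, Finset.mem_univ, iff_true]
    exact ⟨(hG.preconnected u v).some, fun e _ => rfl⟩
  have h3 : (EUset G (fun _ => 0) 0 u).card ≤ G.edgeFinset.card := by
    apply Finset.card_le_card
    simp only [EUset]
    exact Finset.filter_subset _ _
  rw [h2, Finset.card_univ] at h1
  omega

theorem walk_reach (S : Finset V) : ∀ {a b : V} (p : G.Walk a b),
    (∀ x ∈ p.support, x ∉ S) →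
    ∀ (ha : a ∈ ((⊤ : G.Subgraph).deleteVerts ↑S).verts)
      (hb : b ∈ ((⊤ : G.Subgraph).deleteVerts ↑S).verts),
      ((⊤ : G.Subgraph).deleteVerts ↑S).coe.Reachable ⟨a, ha⟩ ⟨b, hb⟩ := by
  intro a b p
  induction p with
  | nil => intro _ _ _; exact Reachable.refl _
  | @cons a x b h q ih =>
    intro hp ha hb
    have hxS : x ∉ S := hp x (by simp)
    have hx : x ∈ ((⊤ : G.Subgraph).deleteVerts ↑S).verts := by
      simp [Subgraph.deleteVerts_verts, hxS]
    have hadj : ((⊤ : G.Subgraph).deleteVerts ↑S).coe.Adj ⟨a, ha⟩ ⟨x, hx⟩ := by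
      show ((⊤ : G.Subgraph).deleteVerts ↑S).Adj a x
      rw [Subgraph.deleteVerts_adj]
      refine ⟨trivial, ?_, trivial, ?_, h⟩
      · simpa using hp a (by simp)
      · simpa using hxS
    exact hadj.reachable.trans (ih (fun y hy => hp y (by simp [hy])) hx hb)

theorem del_connected (S : Finset V)
    (hall : ∀ a b : V, a ∉ S → b ∉ S → AReach G S a b)
    (hne : ∃ v, v ∉ S) : ((⊤ : G.Subgraph).deleteVerts ↑S).coe.Connected := by
  obtain ⟨v₀, hv₀⟩ := hne
  have hv₀' : v₀ ∈ ((⊤ : G.Subgraph).deleteVerts ↑S).verts := by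
    simp [Subgraph.deleteVerts_verts, hv₀]
  rw [connected_iff]
  refine ⟨?_, ⟨⟨v₀, hv₀'⟩⟩⟩
  rintro ⟨a, ha⟩ ⟨b, hb⟩
  have haS : a ∉ S := by
    have := ha; simp [Subgraph.deleteVerts_verts] at this; exact this
  have hbS : b ∉ S := by
    have := hb; simp [Subgraph.deleteVerts_verts] at this; exact this
  obtain ⟨p, hp⟩ := hall a b haS hbS
  exact walk_reach S p hp ha hb

end Fin
end MCAux


theorem stmt4 {V : Type*} [Fintype V] (G : SimpleGraph V) (hG : G.Connected)
    (k : ℕ) (hk : 1 ≤ k) (h : ¬ IsKConnected G (k + 1)) :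
    (mcNumber G : ℤ) ≤ (Nat.card G.edgeSet : ℤ) - (Fintype.card V : ℤ) + k + 1 := by
  unfold IsKConnected at h
  have hm : Nat.card G.edgeSet = G.edgeFinset.card := by
    rw [Nat.card_coe_set_eq, ← coe_edgeFinset, Set.ncard_coe_finset]
  have hq : ∀ (c : Sym2 V → ℕ),
      Nat.card (c '' G.edgeSet) = (G.edgeFinset.image c).card := by
    intro c
    rw [Nat.card_coe_set_eq, ← coe_edgeFinset, ← Finset.coe_image, Set.ncard_coe_finset]
  have hkey : ∀ q ∈ {n : ℕ | ∃ c : Sym2 V → ℕ,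
        IsMCColoring G c ∧ Nat.card (c '' G.edgeSet) = n},
      q + Fintype.card V ≤ G.edgeFinset.card + k + 1 := by
    rintro q ⟨c, hcol, rfl⟩
    rw [hq c]
    by_cases hcard : k + 1 < Fintype.card V
    · have h2 : ¬ ∀ S : Finset V, S.card < k + 1 →
          ((⊤ : G.Subgraph).deleteVerts ↑S).coe.Connected := fun hall => h ⟨hcard, hall⟩
      push_neg at h2
      obtain ⟨S, hScard, hSdis⟩ := h2
      have hvS : ∃ v, v ∉ S := by
        by_contra hv
        push_neg at hv
        have hSu : S = Finset.univ := Finset.eq_univ_iff_forall.2 hv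
        rw [hSu, Finset.card_univ] at hScard
        omega
      have hex : ∃ u w, u ∉ S ∧ w ∉ S ∧ ¬ MCAux.AReach G S u w := by
        by_contra hno
        push_neg at hno
        exact hSdis (MCAux.del_connected S (fun a b ha hb => hno a b ha hb) hvS)
      obtain ⟨u, w, hu, hw, hcut⟩ := hex
      have hmb := MCAux.main_bound hcol hu hw hcut
      omega
    · have h1 : (G.edgeFinset.image c).card ≤ G.edgeFinset.card := Finset.card_image_le
      omega
  have hwitness : {n : ℕ | ∃ c : Sym2 V → ℕ,
      IsMCColoring G c ∧ Nat.card (c '' G.edgeSet) = n}.Nonempty :=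
    ⟨_, ⟨fun _ => 0, fun a b => ⟨(hG.preconnected a b).some, 0, fun e _ => rfl⟩, rfl⟩⟩
  have hnm : Fintype.card V ≤ G.edgeFinset.card + 1 := MCAux.verts_le hG
  have hsup : mcNumber G ≤ G.edgeFinset.card + k + 1 - Fintype.card V := by
    unfold mcNumber
    apply csSup_le hwitness
    intro q hq'
    have := hkey q hq'
    omega
  rw [hm]
  omega
end

section
/- In any extremal MC-coloring of a connected graph G, if a nontrivial color class induces a path with exactly two edges, then the two endpoints (leaves) of that path are nonadjacent in G. -/
open SimpleGraph

theorem stmt8 {V : Type*} [Fintype V] (G : SimpleGraph V) (hG : G.Connected)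
    (c : Sym2 V → ℕ) (hmc : IsMCColoring G c)
    (hext : Nat.card (c '' G.edgeSet) = mcNumber G)
    (x y z : V) (hxy : G.Adj x y) (hyz : G.Adj y z) (hxz : x ≠ z)
    (hcol : c s(x, y) = c s(y, z))
    (hclass : ∀ e ∈ G.edgeSet, c e = c s(x, y) → e = s(x, y) ∨ e = s(y, z)) :
    ¬ G.Adj x z := by
  intro hadj
  classical
  have hxy' : x ≠ y := hxy.ne
  have hyz' : y ≠ z := hyz.ne
  have hne : s(x, y) ≠ s(y, z) := by
    intro h
    rw [Sym2.eq_iff] at h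
    rcases h with ⟨h1, h2⟩ | ⟨h1, h2⟩
    · exact hxy' h1
    · exact hxz h1
  have hne2 : s(x, z) ≠ s(y, z) := by
    intro h
    rw [Sym2.eq_iff] at h
    rcases h with ⟨h1, h2⟩ | ⟨h1, h2⟩
    · exact hxy' h1
    · exact hyz' h2.symm
  -- fresh color
  set S : Set ℕ := c '' G.edgeSet with hS
  have hSfin : S.Finite := (G.edgeSet.toFinite).image c
  set k' : ℕ := sSup S + 1 with hk'
  have hk'notin : k' ∉ S := by
    intro h
    have := le_csSup hSfin.bddAbove h
    omega
  set c' : Sym2 V → ℕ := fun e => if e = s(y, z) then k' else c e with hc'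
  have hc'yz : c' s(y, z) = k' := by simp [hc']
  have hc'xy : c' s(x, y) = c s(x, y) := by simp [hc', hne]
  have hc'xz : c' s(x, z) = c s(x, z) := by simp [hc', hne2]
  -- c' is an MC-coloring
  have edge_walk : ∀ {a b : V}, G.Adj a b →
      ∃ p : G.Walk a b, ∃ k : ℕ, ∀ e ∈ p.edges, c' e = k := by
    intro a b hab
    exact ⟨Walk.cons hab Walk.nil, c' s(a, b), by simp⟩
  have hmc' : IsMCColoring G c' := by
    intro u v
    obtain ⟨p, wk, hp⟩ := hmc u v
    by_cases hmem : s(y, z) ∈ p.edges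
    · -- all edges of p are s(x,y) or s(y,z)
      have hk : wk = c s(x, y) := by
        rw [← hp _ hmem, ← hcol]
      have hall : ∀ e ∈ p.edges, e = s(x, y) ∨ e = s(y, z) := by
        intro e he
        exact hclass e (p.edges_subset_edgeSet he) (by rw [hp e he, hk])
      have endmem : ∀ {a b : V} (q : G.Walk a b),
          (∀ e ∈ q.edges, e = s(x, y) ∨ e = s(y, z)) → q.edges ≠ [] →
          a = x ∨ a = y ∨ a = z := by
        intro a b q hq hne
        cases q with
        | nil => simp at hne
        | cons h q' =>
          rename_i w
          have : s(a, w) = s(x, y) ∨ s(a, w) = s(y, z) := by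
            apply hq; simp
          rcases this with h1 | h1 <;> rw [Sym2.eq_iff] at h1 <;> tauto
      by_cases hnil : p.edges = []
      · exact ⟨p, wk, by intro e he; rw [hnil] at he; simp at he⟩
      · have hu : u = x ∨ u = y ∨ u = z := endmem p hall hnil
        have hv : v = x ∨ v = y ∨ v = z := by
          apply endmem p.reverse
          · intro e he
            exact hall e (by rwa [Walk.edges_reverse, List.mem_reverse] at he)
          · rw [Walk.edges_reverse]
            simpa using hnil
        have nilw : ∀ {a : V} (h : a = a), ∃ p : G.Walk a a, ∃ k : ℕ,
            ∀ e ∈ p.edges, c' e = k := fun _ => ⟨Walk.nil, 0, by simp⟩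
        rcases hu with rfl | rfl | rfl <;> rcases hv with rfl | rfl | rfl
        · exact nilw rfl
        · exact edge_walk hxy
        · exact edge_walk hadj
        · exact edge_walk hxy.symm
        · exact nilw rfl
        · exact edge_walk hyz
        · exact edge_walk hadj.symm
        · exact edge_walk hyz.symm
        · exact nilw rfl
    · refine ⟨p, wk, fun e he => ?_⟩
      have : e ≠ s(y, z) := fun h => hmem (h ▸ he)
      simp only [hc', if_neg this]
      exact hp e he
  -- the image of c' has one more color
  have himg : c' '' G.edgeSet = insert k' S := by
    apply Set.Subset.antisymm
    · rintro w ⟨e, he, rfl⟩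
      by_cases h : e = s(y, z)
      · subst h; rw [hc'yz]; exact Set.mem_insert _ _
      · simp only [hc', if_neg h]
        exact Set.mem_insert_of_mem _ ⟨e, he, rfl⟩
    · rintro w (rfl | ⟨e, he, rfl⟩)
      · exact ⟨s(y, z), (G.mem_edgeSet.mpr hyz), hc'yz⟩
      · by_cases h : e = s(y, z)
        · subst h
          refine ⟨s(x, y), (G.mem_edgeSet.mpr hxy), ?_⟩
          rw [hc'xy, hcol]
        · exact ⟨e, he, by simp [hc', h]⟩
  have hcard : Nat.card (c' '' G.edgeSet) = Nat.card S + 1 := by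
    rw [himg, Nat.card_coe_set_eq, Nat.card_coe_set_eq,
      Set.ncard_insert_of_notMem hk'notin hSfin]
  -- contradiction with maximality
  have hbdd : BddAbove {n : ℕ | ∃ c : Sym2 V → ℕ, IsMCColoring G c ∧
      Nat.card (c '' G.edgeSet) = n} := by
    refine ⟨Nat.card (Sym2 V), ?_⟩
    rintro n ⟨c0, _, rfl⟩
    rw [Nat.card_coe_set_eq]
    calc (c0 '' G.edgeSet).ncard ≤ G.edgeSet.ncard :=
          Set.ncard_image_le G.edgeSet.toFinite
      _ ≤ (Set.univ : Set (Sym2 V)).ncard :=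
          Set.ncard_le_ncard (Set.subset_univ _) Set.finite_univ
      _ = Nat.card (Sym2 V) := by rw [Set.ncard_univ]
  have hmem' : Nat.card S + 1 ∈ {n : ℕ | ∃ c : Sym2 V → ℕ, IsMCColoring G c ∧
      Nat.card (c '' G.edgeSet) = n} := ⟨c', hmc', hcard⟩
  have hle := le_csSup hbdd hmem'
  unfold mcNumber at hext
  rw [← hext] at hle
  omega
end

section
/- Let H be a simple graph. The join K_2 ∨ H (an edge whose two endpoints are each joined to all of H) is planar if and only if H is a linear forest. -/
open SimpleGraph

def IsLinearForest {V : Type*} (G : SimpleGraph V) : Prop :=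
  G.IsAcyclic ∧ ∀ v, Nat.card (G.neighborSet v) ≤ 2

/-! ### Auxiliary lemmas -/

section Aux

open Sum Finset

variable {β : Type*} {H : SimpleGraph β}

lemma induce_singleton_connected {α : Type*} (G : SimpleGraph α) (x : α) :
    (G.induce {x}).Connected := by
  rw [connected_iff]
  refine ⟨?_, ⟨⟨x, rfl⟩⟩⟩
  intro a b
  have : a = b := Subtype.ext (a.2.trans b.2.symm)
  rw [this]

lemma graphJoin_adj_inr {α : Type*} {G₁ : SimpleGraph α} {a b : β} :
    (graphJoin G₁ H).Adj (inr a) (inr b) ↔ H.Adj a b := Iff.rfl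

lemma join_induce_inr_connected_iff {α : Type*} {G₁ : SimpleGraph α} (S : Set β) :
    ((graphJoin G₁ H).induce (Sum.inr '' S)).Connected ↔ (H.induce S).Connected := by
  refine (Iso.connected_iff (G := H.induce S)
    ⟨Equiv.Set.image Sum.inr S Sum.inr_injective, ?_⟩).symm
  rintro ⟨a, ha⟩ ⟨b, hb⟩
  simp [Equiv.Set.image, Equiv.Set.imageOfInjOn, graphJoin_adj_inr]

lemma exists_walk_of_induce_connected {S : Set β} (h : (H.induce S).Connected)
    {x y : β} (hx : x ∈ S) (hy : y ∈ S) :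
    ∃ w : H.Walk x y, ∀ v ∈ w.support, v ∈ S := by
  obtain ⟨w⟩ := h ⟨x, hx⟩ ⟨y, hy⟩
  refine ⟨w.map (Embedding.induce S).toHom, ?_⟩
  intro v hv
  erw [Walk.support_map, List.mem_map] at hv
  obtain ⟨⟨u, hu⟩, _, rfl⟩ := hv
  exact hu

lemma acyclic_no_detour (hac : H.IsAcyclic) {u v : β} (h : H.Adj u v)
    (w : H.Walk v u) (hw : s(u,v) ∉ w.edges) : False := by
  rw [isAcyclic_iff_forall_adj_isBridge] at hac
  have := (isBridge_iff_adj_and_forall_walk_mem_edges.mp (hac h.symm)) w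
  rw [Sym2.eq_swap] at this
  exact hw this

lemma induce_acyclic (hac : H.IsAcyclic) (S : Set β) : (H.induce S).IsAcyclic := by
  intro v c hc
  exact hac _ (hc.map (f := (Embedding.induce S).toHom) Subtype.val_injective)

lemma degree_le_two [Fintype β] [DecidableRel H.Adj]
    (hdeg : ∀ v, Nat.card (H.neighborSet v) ≤ 2) (v : β) : H.degree v ≤ 2 := by
  have := hdeg v
  rwa [Nat.card_eq_fintype_card, card_neighborSet_eq_degree] at this

lemma no_triangle_sets (hac : H.IsAcyclic) {A B C : Set β}
    (hA : (H.induce A).Connected) (hB : (H.induce B).Connected) (hC : (H.induce C).Connected)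
    (hAB : Disjoint A B) (hAC : Disjoint A C) (hBC : Disjoint B C)
    {a1 a2 b1 b2 c1 c2 : β}
    (ha1 : a1 ∈ A) (ha2 : a2 ∈ A) (hb1 : b1 ∈ B) (hb2 : b2 ∈ B) (hc1 : c1 ∈ C) (hc2 : c2 ∈ C)
    (e1 : H.Adj a1 b1) (e2 : H.Adj b2 c1) (e3 : H.Adj c2 a2) : False := by
  obtain ⟨wB, hwB⟩ := exists_walk_of_induce_connected hB hb1 hb2
  obtain ⟨wC, hwC⟩ := exists_walk_of_induce_connected hC hc1 hc2
  obtain ⟨wA, hwA⟩ := exists_walk_of_induce_connected hA ha2 ha1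
  refine acyclic_no_detour hac e1 (wB.append (Walk.cons e2 (wC.append (Walk.cons e3 wA)))) ?_
  simp only [Walk.edges_append, Walk.edges_cons, List.mem_append, List.mem_cons]
  rintro (h | h | h | h | h)
  · exact Set.disjoint_left.mp hAB ha1 (hwB _ (wB.fst_mem_support_of_mem_edges h))
  · rw [Sym2.eq_iff] at h
    rcases h with ⟨rfl, rfl⟩ | ⟨rfl, rfl⟩
    · exact Set.disjoint_left.mp hAB ha1 hb2
    · exact Set.disjoint_left.mp hAC ha1 hc1
  · exact Set.disjoint_left.mp hAC ha1 (hwC _ (wC.fst_mem_support_of_mem_edges h))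
  · rw [Sym2.eq_iff] at h
    rcases h with ⟨rfl, rfl⟩ | ⟨rfl, rfl⟩
    · exact Set.disjoint_left.mp hAC ha1 hc2
    · exact Set.disjoint_right.mp hBC hc2 hb1
  · exact Set.disjoint_left.mp hAB (hwA _ (wA.snd_mem_support_of_mem_edges h)) hb1

lemma no_c4_sets (hac : H.IsAcyclic) {P1 Q1 P2 Q2 : Set β}
    (hP1 : (H.induce P1).Connected) (hQ1 : (H.induce Q1).Connected)
    (hP2 : (H.induce P2).Connected) (hQ2 : (H.induce Q2).Connected)
    (hP1Q1 : Disjoint P1 Q1) (hP1P2 : Disjoint P1 P2) (hP1Q2 : Disjoint P1 Q2)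
    (hQ1P2 : Disjoint Q1 P2) (hQ1Q2 : Disjoint Q1 Q2) (hP2Q2 : Disjoint P2 Q2)
    {p1 p1' q1 q1' p2 p2' q2 q2' : β}
    (hp1 : p1 ∈ P1) (hp1' : p1' ∈ P1) (hq1 : q1 ∈ Q1) (hq1' : q1' ∈ Q1)
    (hp2 : p2 ∈ P2) (hp2' : p2' ∈ P2) (hq2 : q2 ∈ Q2) (hq2' : q2' ∈ Q2)
    (e1 : H.Adj p1 q1) (e2 : H.Adj q1' p2) (e3 : H.Adj p2' q2) (e4 : H.Adj q2' p1') : False := by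
  obtain ⟨w1, hw1⟩ := exists_walk_of_induce_connected hQ1 hq1 hq1'
  obtain ⟨w2, hw2⟩ := exists_walk_of_induce_connected hP2 hp2 hp2'
  obtain ⟨w3, hw3⟩ := exists_walk_of_induce_connected hQ2 hq2 hq2'
  obtain ⟨w4, hw4⟩ := exists_walk_of_induce_connected hP1 hp1' hp1
  refine acyclic_no_detour hac e1
    (w1.append (Walk.cons e2 (w2.append (Walk.cons e3 (w3.append (Walk.cons e4 w4)))))) ?_
  simp only [Walk.edges_append, Walk.edges_cons, List.mem_append, List.mem_cons]
  rintro (h | h | h | h | h | h | h)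
  · exact Set.disjoint_left.mp hP1Q1 hp1 (hw1 _ (w1.fst_mem_support_of_mem_edges h))
  · rw [Sym2.eq_iff] at h
    rcases h with ⟨rfl, rfl⟩ | ⟨rfl, rfl⟩
    · exact Set.disjoint_left.mp hP1Q1 hp1 hq1'
    · exact Set.disjoint_left.mp hP1P2 hp1 hp2
  · exact Set.disjoint_left.mp hP1P2 hp1 (hw2 _ (w2.fst_mem_support_of_mem_edges h))
  · rw [Sym2.eq_iff] at h
    rcases h with ⟨rfl, rfl⟩ | ⟨rfl, rfl⟩
    · exact Set.disjoint_left.mp hP1P2 hp1 hp2'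
    · exact Set.disjoint_left.mp hP1Q2 hp1 hq2
  · exact Set.disjoint_left.mp hP1Q2 hp1 (hw3 _ (w3.fst_mem_support_of_mem_edges h))
  · rw [Sym2.eq_iff] at h
    rcases h with ⟨rfl, rfl⟩ | ⟨rfl, rfl⟩
    · exact Set.disjoint_left.mp hP1Q2 hp1 hq2'
    · exact Set.disjoint_right.mp hQ1Q2 hq2' hq1
  · exact Set.disjoint_left.mp hP1Q1 (hw4 _ (w4.snd_mem_support_of_mem_edges h)) hq1

def clawE {β : Type*} [DecidableEq β] (a a' a'' b c d : β) (x : β) : Finset β :=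
  ((if x = a then {b} else ∅) ∪ (if x = a' then {c} else ∅)) ∪ (if x = a'' then {d} else ∅)

lemma mem_clawE {β : Type*} [DecidableEq β] {a a' a'' b c d x z : β}
    (hz : z ∈ clawE a a' a'' b c d x) :
    (x = a ∧ z = b) ∨ (x = a' ∧ z = c) ∨ (x = a'' ∧ z = d) := by
  simp only [clawE, Finset.mem_union] at hz
  rcases hz with (hz | hz) | hz <;> split_ifs at hz <;>
    simp only [Finset.mem_singleton, Finset.notMem_empty] at hz <;> tauto

lemma card_clawE {β : Type*} [DecidableEq β] {a a' a'' b c d : β}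
    (hbc : b ≠ c) (hbd : b ≠ d) (hcd : c ≠ d) (x : β) :
    (clawE a a' a'' b c d x).card =
      ((if x = a then 1 else 0) + (if x = a' then 1 else 0)) + (if x = a'' then 1 else 0) := by
  have h1 : Disjoint (if x = a then ({b} : Finset β) else ∅) (if x = a' then {c} else ∅) := by
    split_ifs <;> simp [hbc, hbc.symm]
  have h2 : Disjoint ((if x = a then ({b} : Finset β) else ∅) ∪ (if x = a' then {c} else ∅))
      (if x = a'' then {d} else ∅) := by
    rw [Finset.disjoint_union_left]
    constructor <;> split_ifs <;> simp [hbd, hbd.symm, hcd, hcd.symm]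
  rw [clawE, Finset.card_union_of_disjoint h2, Finset.card_union_of_disjoint h1,
    apply_ite Finset.card, apply_ite Finset.card, apply_ite Finset.card]
  simp

lemma no_claw_sets [Fintype β] (hac : H.IsAcyclic)
    (hdeg : ∀ v, Nat.card (H.neighborSet v) ≤ 2) {A : Set β}
    (hA : (H.induce A).Connected) {a a' a'' b c d : β}
    (ha : a ∈ A) (ha' : a' ∈ A) (ha'' : a'' ∈ A)
    (hb : b ∉ A) (hc : c ∉ A) (hd : d ∉ A)
    (hbc : b ≠ c) (hbd : b ≠ d) (hcd : c ≠ d)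
    (e1 : H.Adj a b) (e2 : H.Adj a' c) (e3 : H.Adj a'' d) : False := by
  classical
  have hT : (H.induce A).IsTree := ⟨hA, induce_acyclic hac A⟩
  have hedge : (H.induce A).edgeFinset.card + 1 = Fintype.card A := hT.card_edgeFinset
  have hsum : ∑ v : A, (H.induce A).degree v = 2 * (H.induce A).edgeFinset.card :=
    sum_degrees_eq_twice_card_edges _
  have key : ∀ v : A, (H.induce A).degree v + (clawE a a' a'' b c d v.1).card ≤ H.degree v.1 := by
    rintro ⟨v, hv⟩
    have hsub : (((H.induce A).neighborFinset ⟨v, hv⟩).image Subtype.val)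
        ∪ clawE a a' a'' b c d v ⊆ H.neighborFinset v := by
      intro z hz
      rw [Finset.mem_union] at hz
      rw [SimpleGraph.mem_neighborFinset]
      rcases hz with hz | hz
      · obtain ⟨⟨u, hu⟩, hmem, rfl⟩ := Finset.mem_image.mp hz
        rw [SimpleGraph.mem_neighborFinset] at hmem
        exact hmem
      · rcases mem_clawE hz with ⟨rfl, rfl⟩ | ⟨rfl, rfl⟩ | ⟨rfl, rfl⟩
        · exact e1
        · exact e2
        · exact e3
    have hdisj : Disjoint (((H.induce A).neighborFinset ⟨v, hv⟩).image Subtype.val)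
        (clawE a a' a'' b c d v) := by
      rw [Finset.disjoint_left]
      intro z hz hzE
      obtain ⟨⟨u, hu⟩, _, rfl⟩ := Finset.mem_image.mp hz
      rcases mem_clawE hzE with ⟨_, rfl⟩ | ⟨_, rfl⟩ | ⟨_, rfl⟩
      · exact hb hu
      · exact hc hu
      · exact hd hu
    calc (H.induce A).degree ⟨v, hv⟩ + (clawE a a' a'' b c d v).card
        = ((((H.induce A).neighborFinset ⟨v, hv⟩).image Subtype.val)
            ∪ clawE a a' a'' b c d v).card := by
          rw [Finset.card_union_of_disjoint hdisj,
            Finset.card_image_of_injective _ Subtype.val_injective]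
          rfl
      _ ≤ (H.neighborFinset v).card := Finset.card_le_card hsub
      _ = H.degree v := rfl
  have hEsum : ∑ v : A, (clawE a a' a'' b c d v.1).card = 3 := by
    have heq : ∀ x : A, (clawE a a' a'' b c d x.1).card =
        ((if x = (⟨a, ha⟩ : A) then 1 else 0) + (if x = (⟨a', ha'⟩ : A) then 1 else 0))
          + (if x = (⟨a'', ha''⟩ : A) then 1 else 0) := by
      rintro ⟨x, hx⟩
      rw [card_clawE hbc hbd hcd]
      simp only [Subtype.mk.injEq]
    rw [Finset.sum_congr rfl fun x _ => heq x]
    simp [Finset.sum_add_distrib]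
  have hle : ∑ v : A, H.degree v.1 ≤ 2 * Fintype.card A := by
    calc ∑ v : A, H.degree v.1 ≤ ∑ _v : A, 2 :=
          Finset.sum_le_sum fun v _ => degree_le_two hdeg v.1
      _ = 2 * Fintype.card A := by rw [Finset.sum_const, Finset.card_univ]; ring
  have hge : ∑ v : A, ((H.induce A).degree v + (clawE a a' a'' b c d v.1).card)
      ≤ ∑ v : A, H.degree v.1 := Finset.sum_le_sum fun v _ => key v
  rw [Finset.sum_add_distrib, hsum, hEsum] at hge
  omega

lemma bad_card_le {ι : Type*} [Fintype ι] {f : ι → Set (Fin 2 ⊕ β)}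
    [DecidablePred fun i => inl (0 : Fin 2) ∈ f i ∨ inl (1 : Fin 2) ∈ f i]
    (hdisj : ∀ i j, i ≠ j → Disjoint (f i) (f j)) :
    (Finset.univ.filter fun i =>
      inl (0 : Fin 2) ∈ f i ∨ inl (1 : Fin 2) ∈ f i).card ≤ 2 := by
  classical
  have hcard2 : ({inl (0 : Fin 2), inl (1 : Fin 2)} : Finset (Fin 2 ⊕ β)).card ≤ 2 :=
    Finset.card_insert_le _ _ |>.trans (by simp)
  refine le_trans (Finset.card_le_card_of_injOn
    (fun i => if inl (0 : Fin 2) ∈ f i then inl 0 else inl 1) ?_ ?_) hcard2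
  · intro i _
    dsimp only
    split_ifs <;> simp
  · intro i hi j hj hij
    simp only [Finset.coe_filter, Set.mem_setOf_eq] at hi hj
    by_contra hne
    dsimp only at hij
    split_ifs at hij with h1 h2 h3
    · exact Set.disjoint_left.mp (hdisj i j hne) h1 h2
    · simp at hij
    · simp at hij
    · rcases hi.2 with h | h
      · exact h1 h
      · rcases hj.2 with h' | h'
        · exact h3 h'
        · exact Set.disjoint_left.mp (hdisj i j hne) h h'

lemma clean_repr {F : Set (Fin 2 ⊕ β)} (h0 : inl (0 : Fin 2) ∉ F) (h1 : inl (1 : Fin 2) ∉ F) :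
    F = inr '' (inr ⁻¹' F) := by
  ext x
  cases x with
  | inl a =>
    simp only [Set.mem_image, Set.mem_preimage]
    constructor
    · intro h
      exfalso
      fin_cases a
      · exact h0 h
      · exact h1 h
    · rintro ⟨y, _, h⟩
      exact absurd h (by simp)
  | inr b => simp

lemma cycle_decomp {v : β} (c : H.Walk v v) (hc : c.IsCycle) :
    ∃ (x1 x2 x3 : β) (h1 : H.Adj v x1) (h2 : H.Adj x1 x2) (h3 : H.Adj x2 x3)
      (r : H.Walk x3 v), c = Walk.cons h1 (Walk.cons h2 (Walk.cons h3 r)) := by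
  match c with
  | .nil => exact absurd hc Walk.IsCycle.not_of_nil
  | .cons h .nil => exact absurd h (H.loopless.irrefl v)
  | .cons h1 (.cons h2 .nil) =>
    have := hc.three_le_length
    simp [Walk.length_cons] at this
  | .cons h1 (.cons h2 (.cons h3 r)) => exact ⟨_, _, _, h1, h2, h3, r, rfl⟩

end Aux

theorem stmt11 {β : Type*} [Fintype β] (H : SimpleGraph β) :
    IsPlanar (graphJoin (⊤ : SimpleGraph (Fin 2)) H) ↔ IsLinearForest H := by
  classical
  constructor
  · rintro ⟨h5, h33⟩
    constructor
    · -- acyclic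
      intro v c hc
      obtain ⟨x1, x2, x3, h1, h2, h3, r, rfl⟩ := cycle_decomp c hc
      have hnd := hc.support_nodup
      simp only [Walk.support_cons, List.tail_cons, List.nodup_cons, List.mem_cons] at hnd
      obtain ⟨hx1, hx2, _⟩ := hnd
      push_neg at hx1
      obtain ⟨hx12, hx1r⟩ := hx1
      have hx21 : ¬ x2 = x1 := fun h => hx12 h.symm
      have hrx1 : ∀ a ∈ r.support, ¬ a = x1 := fun a ha h => hx1r (h ▸ ha)
      have hrx2 : ∀ a ∈ r.support, ¬ a = x2 := fun a ha h => hx2 (h ▸ ha)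
      apply h5
      refine ⟨![{Sum.inl 0}, {Sum.inl 1}, {Sum.inr x1}, {Sum.inr x2},
        Sum.inr '' {y | y ∈ r.support}], ?_, ?_, ?_, ?_⟩
      · intro i
        fin_cases i
        · exact ⟨_, rfl⟩
        · exact ⟨_, rfl⟩
        · exact ⟨_, rfl⟩
        · exact ⟨_, rfl⟩
        · exact ⟨Sum.inr x3, ⟨x3, r.start_mem_support, rfl⟩⟩
      · intro i
        fin_cases i
        · exact induce_singleton_connected _ _
        · exact induce_singleton_connected _ _
        · exact induce_singleton_connected _ _
        · exact induce_singleton_connected _ _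
        · exact (join_induce_inr_connected_iff _).mpr r.connected_induce_support
      · intro i j hij
        fin_cases i <;> fin_cases j <;>
          first
          | exact absurd rfl hij
          | simp_all [Set.disjoint_singleton, Set.disjoint_left]
      · intro i j hij
        have memv : Sum.inr v ∈ (Sum.inr '' {y | y ∈ r.support} : Set (Fin 2 ⊕ β)) :=
          ⟨v, r.end_mem_support, rfl⟩
        have memx3 : Sum.inr x3 ∈ (Sum.inr '' {y | y ∈ r.support} : Set (Fin 2 ⊕ β)) :=
          ⟨x3, r.start_mem_support, rfl⟩
        have hne01 : (graphJoin (⊤ : SimpleGraph (Fin 2)) H).Adj (Sum.inl 0) (Sum.inl 1) := by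
          show (0 : Fin 2) ≠ 1
          decide
        fin_cases i <;> fin_cases j <;>
          first
          | exact absurd rfl hij
          | exact ⟨_, rfl, _, rfl, hne01⟩
          | exact ⟨_, rfl, _, rfl, hne01.symm⟩
          | exact ⟨_, rfl, _, rfl, trivial⟩
          | exact ⟨_, rfl, _, memv, trivial⟩
          | exact ⟨_, memv, _, rfl, trivial⟩
          | exact ⟨_, rfl, _, rfl, h2⟩
          | exact ⟨_, rfl, _, rfl, h2.symm⟩
          | exact ⟨_, rfl, _, memv, h1.symm⟩
          | exact ⟨_, memv, _, rfl, h1⟩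
          | exact ⟨_, rfl, _, memx3, h3⟩
          | exact ⟨_, memx3, _, rfl, h3.symm⟩
    · -- degree ≤ 2
      intro v
      by_contra hv
      push_neg at hv
      have hv' : 3 ≤ (H.neighborFinset v).card := by
        have : Nat.card (H.neighborSet v) = (H.neighborFinset v).card := by
          rw [Nat.card_eq_fintype_card, card_neighborSet_eq_degree]
          rfl
        omega
      obtain ⟨t, hts, ht3⟩ := Finset.exists_subset_card_eq hv'
      obtain ⟨b, c, d, hbc, hbd, hcd, rfl⟩ := Finset.card_eq_three.mp ht3
      have hb : H.Adj v b := (SimpleGraph.mem_neighborFinset _ _ _).mp (hts (by simp))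
      have hc : H.Adj v c := (SimpleGraph.mem_neighborFinset _ _ _).mp (hts (by simp))
      have hd : H.Adj v d := (SimpleGraph.mem_neighborFinset _ _ _).mp (hts (by simp))
      apply h33
      refine ⟨Sum.elim ![{Sum.inl 0}, {Sum.inl 1}, {Sum.inr v}]
        ![{Sum.inr b}, {Sum.inr c}, {Sum.inr d}], ?_, ?_, ?_, ?_⟩
      · rintro (i | i) <;> fin_cases i <;> exact ⟨_, rfl⟩
      · rintro (i | i) <;> fin_cases i <;> exact induce_singleton_connected _ _
      · have hvb := hb.ne
        have hvc := hc.ne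
        have hvd := hd.ne
        have hbv := hb.ne'
        have hcv := hc.ne'
        have hdv := hd.ne'
        have hcb : ¬ c = b := fun h => hbc h.symm
        have hdb : ¬ d = b := fun h => hbd h.symm
        have hdc : ¬ d = c := fun h => hcd h.symm
        rintro (i | i) (j | j) hij <;> fin_cases i <;> fin_cases j <;>
          first
          | exact absurd rfl hij
          | simp_all [Set.disjoint_singleton]
      · rintro (i | i) (j | j) hij
        · simp [completeBipartiteGraph] at hij
        · fin_cases i <;> fin_cases j <;>
            first
            | exact ⟨_, rfl, _, rfl, trivial⟩
            | exact ⟨_, rfl, _, rfl, hb⟩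
            | exact ⟨_, rfl, _, rfl, hc⟩
            | exact ⟨_, rfl, _, rfl, hd⟩
        · fin_cases i <;> fin_cases j <;>
            first
            | exact ⟨_, rfl, _, rfl, trivial⟩
            | exact ⟨_, rfl, _, rfl, hb.symm⟩
            | exact ⟨_, rfl, _, rfl, hc.symm⟩
            | exact ⟨_, rfl, _, rfl, hd.symm⟩
        · simp [completeBipartiteGraph] at hij
  · rintro ⟨hac, hdeg⟩
    constructor
    · -- no K5 minor
      rintro ⟨f, hne, hconn, hdisj, hadj⟩
      have hbad : (Finset.univ.filter fun i : Fin 5 =>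
          Sum.inl (0 : Fin 2) ∈ f i ∨ Sum.inl (1 : Fin 2) ∈ f i).card ≤ 2 := bad_card_le hdisj
      have hclean : 3 ≤ (Finset.univ \ (Finset.univ.filter fun i : Fin 5 =>
          Sum.inl (0 : Fin 2) ∈ f i ∨ Sum.inl (1 : Fin 2) ∈ f i)).card := by
        have h5 : (Finset.univ : Finset (Fin 5)).card = 5 := by simp
        have := Finset.card_sdiff_add_card_eq_card (Finset.filter_subset (fun i : Fin 5 =>
          Sum.inl (0 : Fin 2) ∈ f i ∨ Sum.inl (1 : Fin 2) ∈ f i) Finset.univ)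
        omega
      obtain ⟨t, hts, ht3⟩ := Finset.exists_subset_card_eq hclean
      obtain ⟨i, j, k, hij, hik, hjk, rfl⟩ := Finset.card_eq_three.mp ht3
      have hcl : ∀ m ∈ ({i, j, k} : Finset (Fin 5)),
          Sum.inl (0 : Fin 2) ∉ f m ∧ Sum.inl (1 : Fin 2) ∉ f m := by
        intro m hm
        have := hts hm
        simp only [Finset.mem_sdiff, Finset.mem_filter, Finset.mem_univ, true_and] at this
        tauto
      have hcli := hcl i (by simp)
      have hclj := hcl j (by simp)
      have hclk := hcl k (by simp)
      have hconn' : ∀ m : Fin 5, Sum.inl (0 : Fin 2) ∉ f m → Sum.inl (1 : Fin 2) ∉ f m →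
          (H.induce (Sum.inr ⁻¹' f m)).Connected := by
        intro m h0 h1
        have := hconn m
        rw [clean_repr h0 h1] at this
        exact (join_induce_inr_connected_iff _).mp this
      have hdisj' : ∀ m m' : Fin 5, m ≠ m' →
          Disjoint (Sum.inr ⁻¹' f m) (Sum.inr ⁻¹' f m') := by
        intro m m' hmm
        rw [Set.disjoint_left]
        intro z hz hz'
        exact Set.disjoint_left.mp (hdisj m m' hmm) hz hz'
      have hadj' : ∀ m m' : Fin 5, m ≠ m' →
          (Sum.inl (0 : Fin 2) ∉ f m ∧ Sum.inl (1 : Fin 2) ∉ f m) →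
          (Sum.inl (0 : Fin 2) ∉ f m' ∧ Sum.inl (1 : Fin 2) ∉ f m') →
          ∃ x ∈ Sum.inr ⁻¹' f m, ∃ y ∈ Sum.inr ⁻¹' f m', H.Adj x y := by
        intro m m' hmm hm hm'
        obtain ⟨x, hx, y, hy, hxy⟩ := hadj m m' hmm
        rw [clean_repr hm.1 hm.2] at hx
        rw [clean_repr hm'.1 hm'.2] at hy
        obtain ⟨x', hx', rfl⟩ := hx
        obtain ⟨y', hy', rfl⟩ := hy
        exact ⟨x', hx', y', hy', hxy⟩
      obtain ⟨a1, ha1, b1, hb1, eab⟩ := hadj' i j hij hcli hclj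
      obtain ⟨b2, hb2, c1, hc1, ebc⟩ := hadj' j k hjk hclj hclk
      obtain ⟨c2, hc2, a2, ha2, eca⟩ := hadj' k i (Ne.symm hik) hclk hcli
      exact no_triangle_sets hac (hconn' i hcli.1 hcli.2) (hconn' j hclj.1 hclj.2)
        (hconn' k hclk.1 hclk.2) (hdisj' i j hij) (hdisj' i k hik)
        (hdisj' j k hjk) ha1 ha2 hb1 hb2 hc1 hc2 eab ebc eca
    · -- no K33 minor
      rintro ⟨f, hne, hconn, hdisj, hadj⟩
      have hbad : (Finset.univ.filter fun i : Fin 3 ⊕ Fin 3 =>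
          Sum.inl (0 : Fin 2) ∈ f i ∨ Sum.inl (1 : Fin 2) ∈ f i).card ≤ 2 := bad_card_le hdisj
      set P : Fin 3 ⊕ Fin 3 → Prop :=
        fun i => Sum.inl (0 : Fin 2) ∈ f i ∨ Sum.inl (1 : Fin 2) ∈ f i with hP
      have hrepr : ∀ m, ¬ P m → f m = Sum.inr '' (Sum.inr ⁻¹' f m) := by
        intro m hm
        exact clean_repr (fun h => hm (Or.inl h)) (fun h => hm (Or.inr h))
      have hconn' : ∀ m, ¬ P m → (H.induce (Sum.inr ⁻¹' f m)).Connected := by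
        intro m hm
        have := hconn m
        rw [hrepr m hm] at this
        exact (join_induce_inr_connected_iff _).mp this
      have hdisj' : ∀ m m' : Fin 3 ⊕ Fin 3, m ≠ m' →
          Disjoint (Sum.inr ⁻¹' f m) (Sum.inr ⁻¹' f m') := by
        intro m m' hmm
        rw [Set.disjoint_left]
        intro z hz hz'
        exact Set.disjoint_left.mp (hdisj m m' hmm) hz hz'
      have hadj' : ∀ (a b : Fin 3), ¬ P (Sum.inl a) → ¬ P (Sum.inr b) →
          ∃ x ∈ Sum.inr ⁻¹' f (Sum.inl a), ∃ y ∈ Sum.inr ⁻¹' f (Sum.inr b), H.Adj x y := by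
        intro m m' hm hm'
        obtain ⟨x, hx, y, hy, hxy⟩ := hadj (Sum.inl m) (Sum.inr m')
          (by simp [completeBipartiteGraph])
        rw [hrepr _ hm] at hx
        rw [hrepr _ hm'] at hy
        obtain ⟨x', hx', rfl⟩ := hx
        obtain ⟨y', hy', rfl⟩ := hy
        exact ⟨x', hx', y', hy', hxy⟩
      set badL : Finset (Fin 3) := Finset.univ.filter (fun a => P (Sum.inl a)) with hbadL
      set badR : Finset (Fin 3) := Finset.univ.filter (fun a => P (Sum.inr a)) with hbadR
      set L : Finset (Fin 3) := Finset.univ.filter (fun a => ¬ P (Sum.inl a)) with hL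
      set R : Finset (Fin 3) := Finset.univ.filter (fun a => ¬ P (Sum.inr a)) with hR
      have hcount : badL.card + badR.card ≤ 2 := by
        refine le_trans ?_ hbad
        have hsub : badL.image Sum.inl ∪ badR.image Sum.inr ⊆ Finset.univ.filter P := by
          intro z hz
          rw [Finset.mem_union] at hz
          rcases hz with hz | hz <;>
            · obtain ⟨w, hw, rfl⟩ := Finset.mem_image.mp hz
              simp only [hbadL, hbadR, Finset.mem_filter, Finset.mem_univ, true_and] at hw ⊢
              exact hw
        have hdisjLR : Disjoint (badL.image Sum.inl) (badR.image Sum.inr) := by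
          rw [Finset.disjoint_left]
          rintro z hz hz'
          obtain ⟨w, _, rfl⟩ := Finset.mem_image.mp hz
          obtain ⟨w', _, h⟩ := Finset.mem_image.mp hz'
          exact absurd h (by simp)
        calc badL.card + badR.card
            = (badL.image Sum.inl ∪ badR.image Sum.inr).card := by
              rw [Finset.card_union_of_disjoint hdisjLR,
                Finset.card_image_of_injective _ Sum.inl_injective,
                Finset.card_image_of_injective _ Sum.inr_injective]
          _ ≤ (Finset.univ.filter P).card := Finset.card_le_card hsub
      have hLcard : badL.card + L.card = 3 := by
        have := Finset.card_filter_add_card_filter_not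
          (s := (Finset.univ : Finset (Fin 3))) (p := fun a => P (Sum.inl a))
        simpa [hbadL, hL] using this
      have hRcard : badR.card + R.card = 3 := by
        have := Finset.card_filter_add_card_filter_not
          (s := (Finset.univ : Finset (Fin 3))) (p := fun a => P (Sum.inr a))
        simpa [hbadR, hR] using this
      have memL : ∀ a, a ∈ L ↔ ¬ P (Sum.inl a) := by
        intro a; simp [hL]
      have memR : ∀ a, a ∈ R ↔ ¬ P (Sum.inr a) := by
        intro a; simp [hR]
      by_cases hLge : 2 ≤ L.card
      · by_cases hRge : 2 ≤ R.card
        · -- C4 case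
          obtain ⟨a1, ha1, a2, ha2, ha12⟩ := Finset.one_lt_card.mp hLge
          obtain ⟨b1, hb1, b2, hb2, hb12⟩ := Finset.one_lt_card.mp hRge
          rw [memL] at ha1 ha2
          rw [memR] at hb1 hb2
          obtain ⟨p1, hp1, q1, hq1, e1⟩ := hadj' a1 b1 ha1 hb1
          obtain ⟨p2x, hp2x, q1', hq1', e2x⟩ := hadj' a2 b1 ha2 hb1
          obtain ⟨p2', hp2', q2, hq2, e3⟩ := hadj' a2 b2 ha2 hb2
          obtain ⟨p1', hp1', q2', hq2', e4x⟩ := hadj' a1 b2 ha1 hb2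
          exact no_c4_sets hac (hconn' _ ha1) (hconn' _ hb1) (hconn' _ ha2) (hconn' _ hb2)
            (hdisj' _ _ (by simp)) (hdisj' _ _ (by simp [ha12])) (hdisj' _ _ (by simp))
            (hdisj' _ _ (by simp)) (hdisj' _ _ (by simp [hb12])) (hdisj' _ _ (by simp))
            hp1 hp1' hq1 hq1' hp2x hp2' hq2 hq2' e1 e2x.symm e3 e4x.symm
        · -- all left clean, one right clean: claw with center on the right
          push_neg at hRge
          have hbadR2 : 2 ≤ badR.card := by omega
          have hbadL0 : badL.card = 0 := by omega
          have hallL : ∀ a : Fin 3, ¬ P (Sum.inl a) := by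
            intro a hPa
            have : a ∈ badL := Finset.mem_filter.mpr ⟨Finset.mem_univ _, hPa⟩
            have := Finset.card_pos.mpr ⟨a, this⟩
            omega
          have hRpos : 0 < R.card := by omega
          obtain ⟨b0, hb0⟩ := Finset.card_pos.mp hRpos
          rw [memR] at hb0
          obtain ⟨x0, hx0, y0, hy0, e0⟩ := hadj' 0 b0 (hallL 0) hb0
          obtain ⟨x1, hx1, y1, hy1, e1⟩ := hadj' 1 b0 (hallL 1) hb0
          obtain ⟨x2, hx2, y2, hy2, e2⟩ := hadj' 2 b0 (hallL 2) hb0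
          have hAdisj : ∀ a : Fin 3, Disjoint (Sum.inr ⁻¹' f (Sum.inl a))
              (Sum.inr ⁻¹' f (Sum.inr b0)) := fun a => hdisj' _ _ (by simp)
          refine no_claw_sets hac hdeg (hconn' _ hb0)
            (a := y0) (a' := y1) (a'' := y2) (b := x0) (c := x1) (d := x2)
            hy0 hy1 hy2
            (fun h => Set.disjoint_left.mp (hAdisj 0) hx0 h)
            (fun h => Set.disjoint_left.mp (hAdisj 1) hx1 h)
            (fun h => Set.disjoint_left.mp (hAdisj 2) hx2 h)
            ?_ ?_ ?_ e0.symm e1.symm e2.symm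
          · intro hxy
            subst hxy
            exact Set.disjoint_left.mp (hdisj' (Sum.inl 0) (Sum.inl 1) (by simp)) hx0 hx1
          · intro hxy
            subst hxy
            exact Set.disjoint_left.mp (hdisj' (Sum.inl 0) (Sum.inl 2) (by simp)) hx0 hx2
          · intro hxy
            subst hxy
            exact Set.disjoint_left.mp (hdisj' (Sum.inl 1) (Sum.inl 2) (by simp)) hx1 hx2
      · -- all right clean, one left clean: claw with center on the left
        push_neg at hLge
        have hbadL2 : 2 ≤ badL.card := by omega
        have hbadR0 : badR.card = 0 := by omega
        have hallR : ∀ a : Fin 3, ¬ P (Sum.inr a) := by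
          intro a hPa
          have : a ∈ badR := Finset.mem_filter.mpr ⟨Finset.mem_univ _, hPa⟩
          have := Finset.card_pos.mpr ⟨a, this⟩
          omega
        have hLpos : 0 < L.card := by omega
        obtain ⟨a0, ha0⟩ := Finset.card_pos.mp hLpos
        rw [memL] at ha0
        obtain ⟨x0, hx0, y0, hy0, e0⟩ := hadj' a0 0 ha0 (hallR 0)
        obtain ⟨x1, hx1, y1, hy1, e1⟩ := hadj' a0 1 ha0 (hallR 1)
        obtain ⟨x2, hx2, y2, hy2, e2⟩ := hadj' a0 2 ha0 (hallR 2)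
        have hAdisj : ∀ b : Fin 3, Disjoint (Sum.inr ⁻¹' f (Sum.inl a0))
            (Sum.inr ⁻¹' f (Sum.inr b)) := fun b => hdisj' _ _ (by simp)
        refine no_claw_sets hac hdeg (hconn' _ ha0)
          (a := x0) (a' := x1) (a'' := x2) (b := y0) (c := y1) (d := y2)
          hx0 hx1 hx2
          (fun h => Set.disjoint_left.mp (hAdisj 0).symm hy0 h)
          (fun h => Set.disjoint_left.mp (hAdisj 1).symm hy1 h)
          (fun h => Set.disjoint_left.mp (hAdisj 2).symm hy2 h)
          ?_ ?_ ?_ e0 e1 e2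
        · intro hxy
          subst hxy
          exact Set.disjoint_left.mp (hdisj' (Sum.inr 0) (Sum.inr 1) (by simp)) hy0 hy1
        · intro hxy
          subst hxy
          exact Set.disjoint_left.mp (hdisj' (Sum.inr 0) (Sum.inr 2) (by simp)) hy0 hy2
        · intro hxy
          subst hxy
          exact Set.disjoint_left.mp (hdisj' (Sum.inr 1) (Sum.inr 2) (by simp)) hy1 hy2
end

section
/- Let G be a k-connected graph with k ≥ 4 and let S be a vertex-cut of G with |S| = k. Then G contains K_{2,k} as a minor with the part of size k being exactly the vertices of S (one branch vertex in each of two distinct components of G − S). Consequently, if G is planar then the induced subgraph G[S] has maximum degree at most 2. -/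
open SimpleGraph

namespace Stmt13Aux

variable {V : Type*} (G : SimpleGraph V) (S : Finset V)

lemma memDel {z : V} (hz : z ∉ (↑S : Set V)) :
    z ∈ ((⊤ : G.Subgraph).deleteVerts (↑S : Set V)).verts :=
  ⟨Set.mem_univ z, hz⟩

def comp (x : ((⊤ : G.Subgraph).deleteVerts (↑S : Set V)).verts) : Set V :=
  {z : V | ∃ hz : z ∈ ((⊤ : G.Subgraph).deleteVerts (↑S : Set V)).verts,
    ((⊤ : G.Subgraph).deleteVerts (↑S : Set V)).coe.Reachable ⟨z, hz⟩ x}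

lemma mem_comp {x z : ((⊤ : G.Subgraph).deleteVerts (↑S : Set V)).verts} :
    (z : V) ∈ comp G S x ↔ ((⊤ : G.Subgraph).deleteVerts (↑S : Set V)).coe.Reachable z x := by
  constructor
  · rintro ⟨hz, h⟩; rwa [Subtype.coe_eta] at h
  · intro h; exact ⟨z.2, by rwa [Subtype.coe_eta]⟩

lemma self_mem_comp (x) : (x : V) ∈ comp G S x := (mem_comp G S).mpr (Reachable.refl _)

lemma comp_subset (x) : comp G S x ⊆ ((↑S : Set V))ᶜ := by
  rintro z ⟨hz, -⟩; exact hz.2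

lemma adj_coe {a b : V} (ha : a ∉ (↑S : Set V)) (hb : b ∉ (↑S : Set V)) (h : G.Adj a b) :
    ((⊤ : G.Subgraph).deleteVerts (↑S : Set V)).coe.Adj ⟨a, memDel G S ha⟩ ⟨b, memDel G S hb⟩ := by
  show ((⊤ : G.Subgraph).deleteVerts (↑S : Set V)).Adj a b
  exact Subgraph.deleteVerts_adj.mpr ⟨Set.mem_univ a, ha, Set.mem_univ b, hb, h⟩

lemma walk_induce {x : ((⊤ : G.Subgraph).deleteVerts (↑S : Set V)).verts} :
    ∀ {a b : ((⊤ : G.Subgraph).deleteVerts (↑S : Set V)).verts}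
      (_ : ((⊤ : G.Subgraph).deleteVerts (↑S : Set V)).coe.Walk a b)
      (ha : (a : V) ∈ comp G S x) (hb : (b : V) ∈ comp G S x),
      (G.induce (comp G S x)).Reachable ⟨a, ha⟩ ⟨b, hb⟩ := by
  intro a b p
  induction p with
  | nil => intro ha hb; exact Reachable.refl _
  | @cons a c b h q ih =>
    intro ha hb
    have hc : (c : V) ∈ comp G S x :=
      (mem_comp G S).mpr (q.reachable.trans ((mem_comp G S).mp hb))
    have hadj : (G.induce (comp G S x)).Adj ⟨↑a, ha⟩ ⟨↑c, hc⟩ :=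
      Subgraph.coe_adj_sub _ _ _ h
    exact hadj.reachable.trans (ih hc hb)

lemma comp_connected (x) : (G.induce (comp G S x)).Connected := by
  rw [connected_iff]
  refine ⟨?_, ⟨⟨x, self_mem_comp G S x⟩⟩⟩
  rintro ⟨z, hz⟩ ⟨w, hw⟩
  obtain ⟨hz', hzr⟩ := hz
  obtain ⟨hw', hwr⟩ := hw
  obtain ⟨p⟩ := hzr.trans hwr.symm
  exact walk_induce G S p ⟨hz', hzr⟩ ⟨hw', hwr⟩

lemma step [DecidableEq V] {s : V} :
    ∀ {a b : ((⊤ : G.Subgraph).deleteVerts (↑(S.erase s) : Set V)).verts}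
      (_ : ((⊤ : G.Subgraph).deleteVerts (↑(S.erase s) : Set V)).coe.Walk a b)
      (_ : (b : V) ∈ (↑S : Set V)) (ha : (a : V) ∉ (↑S : Set V)),
      ∃ z : ((⊤ : G.Subgraph).deleteVerts (↑S : Set V)).verts,
        G.Adj ↑b ↑z ∧
        ((⊤ : G.Subgraph).deleteVerts (↑S : Set V)).coe.Reachable z ⟨a, memDel G S ha⟩ := by
  intro a b p
  induction p with
  | nil => intro hb ha; exact absurd hb ha
  | @cons a c b h q ih =>
    intro hb ha
    have hGadj : G.Adj ↑a ↑c := Subgraph.coe_adj_sub _ _ _ h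
    by_cases hcS : (c : V) ∈ (↑S : Set V)
    · have hcs : (c : V) = s := by
        by_contra hne
        exact c.2.2 (Finset.mem_coe.mpr (Finset.mem_erase.mpr ⟨hne, Finset.mem_coe.mp hcS⟩))
      have hbs : (b : V) = s := by
        by_contra hne
        exact b.2.2 (Finset.mem_coe.mpr (Finset.mem_erase.mpr ⟨hne, Finset.mem_coe.mp hb⟩))
      refine ⟨⟨↑a, memDel G S ha⟩, ?_, Reachable.refl _⟩
      have h2 : G.Adj ↑c ↑a := hGadj.symm
      rw [hcs] at h2
      rw [hbs]; exact h2
    · obtain ⟨z, hz1, hz2⟩ := ih hb hcS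
      exact ⟨z, hz1, hz2.trans (adj_coe G S hcS ha hGadj.symm).reachable⟩

lemma exists_nbr [Fintype V] [DecidableEq V] {k : ℕ} (hconn : IsKConnected G k) (hk : 4 ≤ k)
    (hcard : S.card = k) {s : V} (hs : s ∈ S)
    (x : ((⊤ : G.Subgraph).deleteVerts (↑S : Set V)).verts) :
    ∃ z ∈ comp G S x, G.Adj s z := by
  have hT : (S.erase s).card < k := by
    rw [Finset.card_erase_of_mem hs, hcard]; omega
  have hconn' := hconn.2 (S.erase s) hT
  have hxS : (x : V) ∉ (↑S : Set V) := x.2.2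
  have hxT : (x : V) ∉ (↑(S.erase s) : Set V) := fun h =>
    hxS (Finset.mem_coe.mpr (Finset.mem_of_mem_erase (Finset.mem_coe.mp h)))
  have hss : s ∉ (↑(S.erase s) : Set V) := by simp
  obtain ⟨p⟩ := hconn'.preconnected ⟨(x : V), memDel G (S.erase s) hxT⟩ ⟨s, memDel G (S.erase s) hss⟩
  obtain ⟨z, hz1, hz2⟩ := step G S p (Finset.mem_coe.mpr hs) hxS
  rw [Subtype.coe_eta] at hz2
  exact ⟨↑z, (mem_comp G S).mpr hz2, hz1⟩

lemma comp_disjoint {x y} (hxy : ¬ ((⊤ : G.Subgraph).deleteVerts (↑S : Set V)).coe.Reachable x y) :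
    Disjoint (comp G S x) (comp G S y) := by
  rw [Set.disjoint_left]
  rintro z ⟨hz, hzx⟩ ⟨hz', hzy⟩
  exact hxy (hzx.symm.trans hzy)

lemma single_connected (a : V) : (G.induce ({a} : Set V)).Connected := by
  rw [connected_iff]
  refine ⟨?_, ⟨⟨a, rfl⟩⟩⟩
  rintro ⟨u, hu⟩ ⟨w, hw⟩
  have : (⟨u, hu⟩ : ({a} : Set V)) = ⟨w, hw⟩ := Subtype.ext (hu.trans hw.symm)
  rw [this]

end Stmt13Aux

theorem stmt13 {V : Type*} [Fintype V] (G : SimpleGraph V) (k : ℕ) (hk : 4 ≤ k)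
    (hconn : IsKConnected G k) (S : Finset V) (hcard : S.card = k)
    (hcut : ¬ ((⊤ : G.Subgraph).deleteVerts ↑S).coe.Connected) :
    (∃ f : Fin 2 ⊕ Fin k → Set V,
      (∀ b, (f b).Nonempty) ∧
      (∀ b, (G.induce (f b)).Connected) ∧
      (∀ b₁ b₂, b₁ ≠ b₂ → Disjoint (f b₁) (f b₂)) ∧
      (∀ b₁ b₂, (completeBipartiteGraph (Fin 2) (Fin k)).Adj b₁ b₂ →
        ∃ x ∈ f b₁, ∃ y ∈ f b₂, G.Adj x y) ∧
      (∀ i : Fin k, ∃ s ∈ S, f (Sum.inr i) = {s}) ∧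
      ((⋃ i : Fin k, f (Sum.inr i)) = (↑S : Set V)) ∧
      (∀ j : Fin 2, f (Sum.inl j) ⊆ ((↑S : Set V))ᶜ) ∧
      (∀ x y : ((⊤ : G.Subgraph).deleteVerts ↑S).verts,
        (x : V) ∈ f (Sum.inl 0) → (y : V) ∈ f (Sum.inl 1) →
          ¬ ((⊤ : G.Subgraph).deleteVerts ↑S).coe.Reachable x y)) ∧
    (IsPlanar G → ∀ v ∈ S, Nat.card {u : V | u ∈ S ∧ G.Adj v u} ≤ 2) := by
  classical
  -- a vertex outside S
  obtain ⟨v0, hv0⟩ : ∃ v : V, v ∉ S := by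
    by_contra h
    push_neg at h
    have hsub : (Finset.univ : Finset V) ⊆ S := fun v _ => h v
    have h1 := Finset.card_le_card hsub
    have h2 := hconn.1
    rw [Finset.card_univ, hcard] at h1
    omega
  have hne : Nonempty ((⊤ : G.Subgraph).deleteVerts (↑S : Set V)).verts :=
    ⟨⟨v0, Stmt13Aux.memDel G S (by simpa using hv0)⟩⟩
  rw [connected_iff] at hcut
  push_neg at hcut
  have hnp : ¬ ((⊤ : G.Subgraph).deleteVerts (↑S : Set V)).coe.Preconnected :=
    fun h => not_isEmpty_iff.mpr hne (hcut h)
  unfold SimpleGraph.Preconnected at hnp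
  push_neg at hnp
  obtain ⟨x, y, hxy⟩ := hnp
  set C0 := Stmt13Aux.comp G S x with hC0
  set C1 := Stmt13Aux.comp G S y with hC1
  have hd01 : Disjoint C0 C1 := Stmt13Aux.comp_disjoint G S hxy
  have hC0S : ∀ w ∈ S, w ∉ C0 := fun w hw hmem =>
    (Stmt13Aux.comp_subset G S x hmem) (Finset.mem_coe.mpr hw)
  have hC1S : ∀ w ∈ S, w ∉ C1 := fun w hw hmem =>
    (Stmt13Aux.comp_subset G S y hmem) (Finset.mem_coe.mpr hw)
  have hnbr : ∀ {s : V}, s ∈ S → ∀ w, ∃ z ∈ Stmt13Aux.comp G S w, G.Adj s z :=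
    fun hs w => Stmt13Aux.exists_nbr G S hconn hk hcard hs w
  -- the labelling of S
  set e : Fin k → V := fun i => ↑(S.equivFin.symm (Fin.cast hcard.symm i)) with he
  have he_mem : ∀ i, e i ∈ S := fun i => (S.equivFin.symm _).2
  have he_inj : Function.Injective e := by
    intro i j hij
    have h2 := S.equivFin.symm.injective (Subtype.coe_injective hij)
    simpa [Fin.ext_iff] using congrArg Fin.val h2
  have he_surj : ∀ s ∈ S, ∃ i, e i = s := by
    intro s hs
    refine ⟨Fin.cast hcard (S.equivFin ⟨s, hs⟩), ?_⟩
    have hcast : Fin.cast hcard.symm (Fin.cast hcard (S.equivFin ⟨s, hs⟩)) =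
        S.equivFin ⟨s, hs⟩ := by
      ext; simp
    rw [he]
    simp only [hcast, Equiv.symm_apply_apply]
  constructor
  · refine ⟨Sum.elim ![C0, C1] (fun i => {e i}), ?_, ?_, ?_, ?_, ?_, ?_, ?_, ?_⟩
    · rintro (j | i)
      · fin_cases j <;>
          simp only [Sum.elim_inl, Matrix.cons_val_zero, Matrix.cons_val_one, Matrix.head_cons]
        · exact ⟨↑x, Stmt13Aux.self_mem_comp G S x⟩
        · exact ⟨↑y, Stmt13Aux.self_mem_comp G S y⟩
      · exact ⟨e i, rfl⟩
    · rintro (j | i)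
      · fin_cases j <;>
          simp only [Sum.elim_inl, Matrix.cons_val_zero, Matrix.cons_val_one, Matrix.head_cons]
        · exact Stmt13Aux.comp_connected G S x
        · exact Stmt13Aux.comp_connected G S y
      · exact Stmt13Aux.single_connected G (e i)
    · rintro (j₁ | i₁) (j₂ | i₂) hne'
      · fin_cases j₁ <;> fin_cases j₂ <;>
          simp only [Sum.elim_inl, Matrix.cons_val_zero, Matrix.cons_val_one,
            Matrix.head_cons] <;>
          first
            | exact absurd rfl hne'
            | exact hd01
            | exact hd01.symm
      · fin_cases j₁ <;>
          simp only [Sum.elim_inl, Sum.elim_inr, Matrix.cons_val_zero, Matrix.cons_val_one,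
            Matrix.head_cons] <;>
          rw [Set.disjoint_singleton_right] <;>
          first
            | exact hC0S _ (he_mem i₂)
            | exact hC1S _ (he_mem i₂)
      · fin_cases j₂ <;>
          simp only [Sum.elim_inl, Sum.elim_inr, Matrix.cons_val_zero, Matrix.cons_val_one,
            Matrix.head_cons] <;>
          rw [Set.disjoint_singleton_left] <;>
          first
            | exact hC0S _ (he_mem i₁)
            | exact hC1S _ (he_mem i₁)
      · simp only [Sum.elim_inr]
        rw [Set.disjoint_singleton]
        exact fun h => hne' (congrArg Sum.inr (he_inj h))
    · rintro (j₁ | i₁) (j₂ | i₂) hadj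
      · simp [completeBipartiteGraph] at hadj
      · fin_cases j₁ <;>
          simp only [Sum.elim_inl, Sum.elim_inr, Matrix.cons_val_zero, Matrix.cons_val_one,
            Matrix.head_cons]
        · obtain ⟨z, hzc, hza⟩ := hnbr (he_mem i₂) x
          exact ⟨z, hzc, e i₂, rfl, hza.symm⟩
        · obtain ⟨z, hzc, hza⟩ := hnbr (he_mem i₂) y
          exact ⟨z, hzc, e i₂, rfl, hza.symm⟩
      · fin_cases j₂ <;>
          simp only [Sum.elim_inl, Sum.elim_inr, Matrix.cons_val_zero, Matrix.cons_val_one,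
            Matrix.head_cons]
        · obtain ⟨z, hzc, hza⟩ := hnbr (he_mem i₁) x
          exact ⟨e i₁, rfl, z, hzc, hza⟩
        · obtain ⟨z, hzc, hza⟩ := hnbr (he_mem i₁) y
          exact ⟨e i₁, rfl, z, hzc, hza⟩
      · simp [completeBipartiteGraph] at hadj
    · exact fun i => ⟨e i, he_mem i, rfl⟩
    · ext z
      simp only [Sum.elim_inr, Set.mem_iUnion, Set.mem_singleton_iff, Finset.mem_coe]
      constructor
      · rintro ⟨i, rfl⟩; exact he_mem i
      · intro hz; obtain ⟨i, hi⟩ := he_surj z hz; exact ⟨i, hi.symm⟩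
    · intro j
      fin_cases j <;>
        simp only [Sum.elim_inl, Matrix.cons_val_zero, Matrix.cons_val_one, Matrix.head_cons]
      · exact Stmt13Aux.comp_subset G S x
      · exact Stmt13Aux.comp_subset G S y
    · intro x' y' hx' hy' hr
      simp only [Sum.elim_inl, Matrix.cons_val_zero, Matrix.cons_val_one,
        Matrix.head_cons] at hx' hy'
      exact hxy (((Stmt13Aux.mem_comp G S).mp hx').symm.trans
        (hr.trans ((Stmt13Aux.mem_comp G S).mp hy')))
  · intro hp v hv
    by_contra hcon
    push_neg at hcon
    have h3 : 3 ≤ ({u : V | u ∈ S ∧ G.Adj v u}).ncard := by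
      rw [← Nat.card_coe_set_eq]; omega
    obtain ⟨t, hts, htc⟩ := Set.exists_subset_card_eq h3
    obtain ⟨u0, u1, u2, h01, h02, h12, rfl⟩ := Set.ncard_eq_three.mp htc
    have hu0 : u0 ∈ S ∧ G.Adj v u0 := hts (by simp)
    have hu1 : u1 ∈ S ∧ G.Adj v u1 := hts (by simp)
    have hu2 : u2 ∈ S ∧ G.Adj v u2 := hts (by simp)
    obtain ⟨z00, hz00c, hz00a⟩ := hnbr hu0.1 x
    obtain ⟨z01, hz01c, hz01a⟩ := hnbr hu1.1 x
    obtain ⟨z02, hz02c, hz02a⟩ := hnbr hu2.1 x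
    obtain ⟨z10, hz10c, hz10a⟩ := hnbr hu0.1 y
    obtain ⟨z11, hz11c, hz11a⟩ := hnbr hu1.1 y
    obtain ⟨z12, hz12c, hz12a⟩ := hnbr hu2.1 y
    have hv0' : v ∉ C0 := hC0S v hv
    have hv1' : v ∉ C1 := hC1S v hv
    refine hp.2 ⟨Sum.elim ![C0, C1, {v}] ![{u0}, {u1}, {u2}], ?_, ?_, ?_, ?_⟩
    · rintro (j | j) <;> fin_cases j <;>
        simp only [Sum.elim_inl, Sum.elim_inr, Matrix.cons_val_zero, Matrix.cons_val_one,
          Matrix.head_cons, Matrix.cons_val_two, Matrix.tail_cons] <;>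
        first
          | exact ⟨↑x, Stmt13Aux.self_mem_comp G S x⟩
          | exact ⟨↑y, Stmt13Aux.self_mem_comp G S y⟩
          | exact Set.singleton_nonempty _
    · rintro (j | j) <;> fin_cases j <;>
        simp only [Sum.elim_inl, Sum.elim_inr, Matrix.cons_val_zero, Matrix.cons_val_one,
          Matrix.head_cons, Matrix.cons_val_two, Matrix.tail_cons] <;>
        first
          | exact Stmt13Aux.comp_connected G S x
          | exact Stmt13Aux.comp_connected G S y
          | exact Stmt13Aux.single_connected G _
    · rintro (j₁ | j₁) (j₂ | j₂) hne' <;> fin_cases j₁ <;> fin_cases j₂ <;>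
        simp only [Sum.elim_inl, Sum.elim_inr, Matrix.cons_val_zero, Matrix.cons_val_one,
          Matrix.head_cons, Matrix.cons_val_two, Matrix.tail_cons] <;>
        first
          | exact absurd rfl hne'
          | exact hd01
          | exact hd01.symm
          | exact Set.disjoint_singleton_right.mpr hv0'
          | exact Set.disjoint_singleton_right.mpr hv1'
          | exact Set.disjoint_singleton_left.mpr hv0'
          | exact Set.disjoint_singleton_left.mpr hv1'
          | exact Set.disjoint_singleton_right.mpr (hC0S u0 hu0.1)
          | exact Set.disjoint_singleton_right.mpr (hC0S u1 hu1.1)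
          | exact Set.disjoint_singleton_right.mpr (hC0S u2 hu2.1)
          | exact Set.disjoint_singleton_right.mpr (hC1S u0 hu0.1)
          | exact Set.disjoint_singleton_right.mpr (hC1S u1 hu1.1)
          | exact Set.disjoint_singleton_right.mpr (hC1S u2 hu2.1)
          | exact Set.disjoint_singleton_left.mpr (hC0S u0 hu0.1)
          | exact Set.disjoint_singleton_left.mpr (hC0S u1 hu1.1)
          | exact Set.disjoint_singleton_left.mpr (hC0S u2 hu2.1)
          | exact Set.disjoint_singleton_left.mpr (hC1S u0 hu0.1)
          | exact Set.disjoint_singleton_left.mpr (hC1S u1 hu1.1)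
          | exact Set.disjoint_singleton_left.mpr (hC1S u2 hu2.1)
          | exact Set.disjoint_singleton.mpr (G.ne_of_adj hu0.2)
          | exact Set.disjoint_singleton.mpr (G.ne_of_adj hu1.2)
          | exact Set.disjoint_singleton.mpr (G.ne_of_adj hu2.2)
          | exact Set.disjoint_singleton.mpr (G.ne_of_adj hu0.2).symm
          | exact Set.disjoint_singleton.mpr (G.ne_of_adj hu1.2).symm
          | exact Set.disjoint_singleton.mpr (G.ne_of_adj hu2.2).symm
          | exact Set.disjoint_singleton.mpr h01
          | exact Set.disjoint_singleton.mpr h02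
          | exact Set.disjoint_singleton.mpr h12
          | exact Set.disjoint_singleton.mpr h01.symm
          | exact Set.disjoint_singleton.mpr h02.symm
          | exact Set.disjoint_singleton.mpr h12.symm
    · rintro (j₁ | j₁) (j₂ | j₂) hadj
      · simp [completeBipartiteGraph] at hadj
      · fin_cases j₁ <;> fin_cases j₂ <;>
          simp only [Sum.elim_inl, Sum.elim_inr, Matrix.cons_val_zero, Matrix.cons_val_one,
            Matrix.head_cons, Matrix.cons_val_two, Matrix.tail_cons] <;>
          first
            | exact ⟨z00, hz00c, u0, rfl, hz00a.symm⟩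
            | exact ⟨z01, hz01c, u1, rfl, hz01a.symm⟩
            | exact ⟨z02, hz02c, u2, rfl, hz02a.symm⟩
            | exact ⟨z10, hz10c, u0, rfl, hz10a.symm⟩
            | exact ⟨z11, hz11c, u1, rfl, hz11a.symm⟩
            | exact ⟨z12, hz12c, u2, rfl, hz12a.symm⟩
            | exact ⟨v, rfl, u0, rfl, hu0.2⟩
            | exact ⟨v, rfl, u1, rfl, hu1.2⟩
            | exact ⟨v, rfl, u2, rfl, hu2.2⟩
      · fin_cases j₁ <;> fin_cases j₂ <;>
          simp only [Sum.elim_inl, Sum.elim_inr, Matrix.cons_val_zero, Matrix.cons_val_one,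
            Matrix.head_cons, Matrix.cons_val_two, Matrix.tail_cons] <;>
          first
            | exact ⟨u0, rfl, z00, hz00c, hz00a⟩
            | exact ⟨u1, rfl, z01, hz01c, hz01a⟩
            | exact ⟨u2, rfl, z02, hz02c, hz02a⟩
            | exact ⟨u0, rfl, z10, hz10c, hz10a⟩
            | exact ⟨u1, rfl, z11, hz11c, hz11a⟩
            | exact ⟨u2, rfl, z12, hz12c, hz12a⟩
            | exact ⟨u0, rfl, v, rfl, hu0.2.symm⟩
            | exact ⟨u1, rfl, v, rfl, hu1.2.symm⟩
            | exact ⟨u2, rfl, v, rfl, hu2.2.symm⟩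
      · simp [completeBipartiteGraph] at hadj
end

section
/- Let G be a connected graph whose vertex set can be partitioned into k nonempty parts {u}, U_1, ..., U_{k-1} such that each induced subgraph G[U_i ∪ {u}] is connected and the parts U_1, ..., U_{k-1} pairwise form a complete (k-1)-partite pattern. Then the edge-coloring in which, for each i, a spanning tree of G[U_i ∪ {u}] receives color i and every other edge gets its own distinct color is an MC-coloring of G using exactly m - n + k colors; hence mc(G) ≥ m - n + k. -/
open SimpleGraph

lemma ncard_iUnion_aux {α ι : Type*} [Fintype ι] (f : ι → Set α) (hf : ∀ i, (f i).Finite)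
    (hd : Pairwise (Function.onFun Disjoint f)) :
    (⋃ i, f i).ncard = ∑ i, (f i).ncard := by
  classical
  have h1 : (⋃ i, f i) = ↑(Finset.univ.biUnion fun i => (hf i).toFinset) := by
    ext x; simp [Set.Finite.mem_toFinset]
  rw [h1, Set.ncard_coe_finset, Finset.card_biUnion]
  · exact Finset.sum_congr rfl fun i _ => (Set.ncard_eq_toFinset_card (f i) (hf i)).symm
  · intro x _ y _ hxy
    rw [Function.onFun, Set.Finite.disjoint_toFinset]
    exact hd hxy

theorem stmt19 {V : Type*} [Fintype V] (G : SimpleGraph V) (hG : G.Connected)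
    (k : ℕ) (hk : 2 ≤ k) (u : V) (U : Fin (k - 1) → Set V)
    (hne : ∀ i, (U i).Nonempty)
    (hu : ∀ i, u ∉ U i)
    (hdisj : Pairwise fun i j => Disjoint (U i) (U j))
    (hcover : ∀ x : V, x ≠ u → ∃ i, x ∈ U i)
    (hconn : ∀ i, (G.induce (U i ∪ {u})).Connected)
    (hmulti : ∀ i j, i ≠ j → ∀ x ∈ U i, ∀ y ∈ U j, G.Adj x y)
    (T : (i : Fin (k - 1)) → SimpleGraph ((U i ∪ {u}) : Set V))
    (hTle : ∀ i, T i ≤ G.induce (U i ∪ {u}))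
    (hTtree : ∀ i, (T i).IsTree)
    (c : Sym2 V → ℕ)
    (hc1 : ∀ i : Fin (k - 1), ∀ e ∈ (T i).edgeSet, c (Sym2.map Subtype.val e) = (i : ℕ))
    (hc2 : ∀ e ∈ G.edgeSet,
      (∀ i : Fin (k - 1), e ∉ Sym2.map Subtype.val '' (T i).edgeSet) → k - 1 ≤ c e)
    (hc3 : Set.InjOn c
      (G.edgeSet \ ⋃ i : Fin (k - 1), Sym2.map Subtype.val '' (T i).edgeSet)) :
    IsMCColoring G c ∧
      (Nat.card (c '' G.edgeSet) : ℤ) =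
        (Nat.card G.edgeSet : ℤ) - (Fintype.card V : ℤ) + k ∧
      (mcNumber G : ℤ) ≥ (Nat.card G.edgeSet : ℤ) - (Fintype.card V : ℤ) + k := by

  classical
  -- homomorphism from each tree into G
  -- monochromatic tree walks
  have treewalk : ∀ (i : Fin (k-1)) (x y : ((U i ∪ {u}) : Set V)),
      ∃ p : G.Walk (x : V) (y : V), ∀ e ∈ p.edges, c e = (i : ℕ) := by
    intro i x y
    obtain ⟨p⟩ := (hTtree i).isConnected.preconnected x y
    refine ⟨p.map ((SimpleGraph.Embedding.induce (U i ∪ {u})).toHom.comp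
      (SimpleGraph.Hom.ofLE (hTle i))), ?_⟩
    intro e he
    erw [SimpleGraph.Walk.edges_map, List.mem_map] at he
    obtain ⟨e', he', rfl⟩ := he
    exact hc1 i e' (p.edges_subset_edgeSet he')
  -- Part 1 : MC coloring
  have mc : IsMCColoring G c := by
    intro v w
    by_cases hvw : v = w
    · subst hvw; exact ⟨SimpleGraph.Walk.nil, 0, by simp⟩
    by_cases hv : v = u
    · subst hv
      obtain ⟨j, hj⟩ := hcover w (fun h => hvw h.symm)
      obtain ⟨p, hp⟩ := treewalk j ⟨v, Or.inr rfl⟩ ⟨w, Or.inl hj⟩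
      exact ⟨p, j, hp⟩
    by_cases hw : w = u
    · subst hw
      obtain ⟨j, hj⟩ := hcover v hv
      obtain ⟨p, hp⟩ := treewalk j ⟨v, Or.inl hj⟩ ⟨w, Or.inr rfl⟩
      exact ⟨p, j, hp⟩
    obtain ⟨i, hi⟩ := hcover v hv
    obtain ⟨j, hj⟩ := hcover w hw
    by_cases hij : i = j
    · subst hij
      obtain ⟨p, hp⟩ := treewalk i ⟨v, Or.inl hi⟩ ⟨w, Or.inl hj⟩
      exact ⟨p, i, hp⟩
    · have hadj : G.Adj v w := hmulti i j hij v hi w hj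
      refine ⟨hadj.toWalk, c s(v, w), ?_⟩
      intro e he
      simp only [SimpleGraph.Walk.edges_cons, SimpleGraph.Walk.edges_nil,
        List.mem_singleton] at he
      subst he; rfl
  refine ⟨mc, ?_⟩
  -- setup for counting
  set Ai : Fin (k-1) → Set (Sym2 V) :=
    fun i => Sym2.map Subtype.val '' (T i).edgeSet with hAi_def
  set A : Set (Sym2 V) := ⋃ i, Ai i with hA_def
  set B : Set (Sym2 V) := G.edgeSet \ A with hB_def
  have hAiE : ∀ i, Ai i ⊆ G.edgeSet := by
    intro i e he
    obtain ⟨e', he', rfl⟩ := he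
    induction e' with
    | _ a b =>
      rw [Sym2.map_pair_eq, SimpleGraph.mem_edgeSet]
      exact hTle i he'
  have hAE : A ⊆ G.edgeSet := Set.iUnion_subset hAiE
  have hmemAi : ∀ i e, e ∈ Ai i → ∀ x ∈ e, x ∈ U i ∪ {u} := by
    intro i e he x hx
    obtain ⟨e', he', rfl⟩ := he
    rw [Sym2.mem_map] at hx
    obtain ⟨y, _, rfl⟩ := hx
    exact y.2
  have hAidisj : Pairwise (Function.onFun Disjoint Ai) := by
    intro i j hij
    rw [Function.onFun, Set.disjoint_left]
    intro e hei hej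
    obtain ⟨e', he', rfl⟩ := hei
    induction e' with
    | _ a b =>
      have hab : (a : V) ≠ (b : V) := by
        intro h
        exact (T _).ne_of_adj he' (Subtype.val_injective h)
      have key : ∀ z : V, z ∈ U i ∪ {u} → z ∈ U j ∪ {u} → z = u := by
        intro z hz1 hz2
        rcases hz1 with hz1 | hz1
        · rcases hz2 with hz2 | hz2
          · exact absurd hz2 (Set.disjoint_left.1 (hdisj hij) hz1)
          · exact hz2
        · exact hz1
      have ha : (a : V) = u := key _ (a.2)
        (hmemAi j _ hej (a : V) (by rw [Sym2.map_pair_eq]; exact Sym2.mem_mk_left _ _))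
      have hb : (b : V) = u := key _ (b.2)
        (hmemAi j _ hej (b : V) (by rw [Sym2.map_pair_eq]; exact Sym2.mem_mk_right _ _))
      exact hab (ha.trans hb.symm)
  -- each tree has an edge
  have htedge : ∀ i, ∃ e, e ∈ (T i).edgeSet := by
    intro i
    obtain ⟨x₀, hx₀⟩ := hne i
    have hx₀u : x₀ ≠ u := fun h => hu i (h ▸ hx₀)
    obtain ⟨p⟩ := (hTtree i).isConnected.preconnected ⟨x₀, Or.inl hx₀⟩ ⟨u, Or.inr rfl⟩
    cases p with
    | nil => simp at hx₀u
    | cons h q => exact ⟨_, (SimpleGraph.mem_edgeSet _).2 h⟩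
  -- image of A under c
  have hcA : c '' A = Set.range (fun i : Fin (k-1) => (i : ℕ)) := by
    ext n
    constructor
    · rintro ⟨e, he, rfl⟩
      rw [Set.mem_iUnion] at he
      obtain ⟨i, e', he', rfl⟩ := he
      exact ⟨i, (hc1 i e' he').symm⟩
    · rintro ⟨i, rfl⟩
      obtain ⟨e, he⟩ := htedge i
      exact ⟨Sym2.map Subtype.val e, Set.mem_iUnion.2 ⟨i, e, he, rfl⟩, hc1 i e he⟩
  -- cardinalities
  have hcardAi : ∀ i, (Ai i).ncard = (U i).ncard := by
    intro i
    haveI : Fintype ((U i ∪ {u} : Set V)) := Set.Finite.fintype (Set.toFinite _)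
    haveI : Fintype ((T i).edgeSet) := Set.Finite.fintype (Set.toFinite _)
    have h1 : (Ai i).ncard = (T i).edgeSet.ncard :=
      Set.ncard_image_of_injective _ (Sym2.map.injective Subtype.val_injective)
    have h2 : (T i).edgeSet.ncard = (T i).edgeFinset.card := by
      rw [Set.ncard_eq_toFinset_card', SimpleGraph.edgeFinset]
    have h3 := (hTtree i).card_edgeFinset
    have h4 : Fintype.card ((U i ∪ {u} : Set V)) = (U i ∪ {u}).ncard := by
      rw [Set.ncard_eq_toFinset_card', Set.toFinset_card]
    have h5 : (U i ∪ {u}).ncard = (U i).ncard + 1 := by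
      rw [Set.union_singleton, Set.ncard_insert_of_notMem (hu i) (Set.toFinite _)]
    omega
  have hcardA : A.ncard = ∑ i, (U i).ncard := by
    rw [hA_def, ncard_iUnion_aux Ai (fun i => Set.toFinite _) hAidisj]
    exact Finset.sum_congr rfl fun i _ => hcardAi i
  have hcardE : G.edgeSet.ncard = A.ncard + B.ncard := by
    rw [hB_def, ← Set.ncard_union_eq Set.disjoint_sdiff_right (Set.toFinite _) (Set.toFinite _),
      Set.union_diff_cancel hAE]
  have hcardV : Fintype.card V = 1 + ∑ i, (U i).ncard := by
    have huniv : (Set.univ : Set V) = {u} ∪ ⋃ i, U i := by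
      ext x
      simp only [Set.mem_univ, true_iff, Set.mem_union, Set.mem_singleton_iff,
        Set.mem_iUnion]
      by_cases hx : x = u
      · exact Or.inl hx
      · exact Or.inr (hcover x hx)
    have hnu : u ∉ ⋃ i, U i := by
      rw [Set.mem_iUnion]; rintro ⟨i, hi⟩; exact hu i hi
    have := Set.ncard_univ V
    rw [huniv, Set.singleton_union, Set.ncard_insert_of_notMem hnu (Set.toFinite _),
      ncard_iUnion_aux U (fun i => Set.toFinite _) hdisj, Nat.card_eq_fintype_card] at this
    omega
  have himg : c '' G.edgeSet = (c '' A) ∪ (c '' B) := by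
    rw [← Set.image_union, Set.union_diff_cancel hAE]
  have hdisj2 : Disjoint (c '' A) (c '' B) := by
    rw [Set.disjoint_left]
    rintro n hnA ⟨e, heB, rfl⟩
    rw [hcA] at hnA
    obtain ⟨i, hi⟩ := hnA
    simp only [] at hi
    have h2 : k - 1 ≤ c e := hc2 e heB.1 (fun j hj => heB.2 (Set.mem_iUnion.2 ⟨j, hj⟩))
    rw [← hi] at h2
    exact absurd i.2 (not_lt.2 h2)
  have hcardcA : (c '' A).ncard = k - 1 := by
    rw [hcA, ← Nat.card_coe_set_eq,
      Nat.card_range_of_injective (Fin.val_injective), Nat.card_eq_fintype_card,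
      Fintype.card_fin]
  have hcardcB : (c '' B).ncard = B.ncard := Set.ncard_image_of_injOn hc3
  have hcardimg : (c '' G.edgeSet).ncard = (k - 1) + B.ncard := by
    rw [himg, Set.ncard_union_eq hdisj2 (Set.toFinite _) (Set.toFinite _), hcardcA, hcardcB]
  have part2 : (Nat.card (c '' G.edgeSet) : ℤ) =
      (Nat.card G.edgeSet : ℤ) - (Fintype.card V : ℤ) + k := by
    rw [Nat.card_coe_set_eq, Nat.card_coe_set_eq]
    omega
  refine ⟨part2, ?_⟩
  -- Part 3
  have hmem : Nat.card (c '' G.edgeSet) ∈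
      {n : ℕ | ∃ c : Sym2 V → ℕ, IsMCColoring G c ∧ Nat.card (c '' G.edgeSet) = n} :=
    ⟨c, mc, rfl⟩
  have hbdd : BddAbove
      {n : ℕ | ∃ c : Sym2 V → ℕ, IsMCColoring G c ∧ Nat.card (c '' G.edgeSet) = n} := by
    refine ⟨G.edgeSet.ncard, ?_⟩
    rintro n ⟨c', _, rfl⟩
    rw [Nat.card_coe_set_eq]
    exact Set.ncard_image_le (Set.toFinite _)
  have hle : Nat.card (c '' G.edgeSet) ≤ mcNumber G := le_csSup hbdd hmem
  calc (Nat.card G.edgeSet : ℤ) - (Fintype.card V : ℤ) + k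
      = (Nat.card (c '' G.edgeSet) : ℤ) := part2.symm
    _ ≤ (mcNumber G : ℤ) := by exact_mod_cast hle
end
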